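/- arXiv:math/0111202 — 11 statements merged into one kernel-verified Lean document; each statement's English description precedes it below -/
import Mathlib

section
/- Let k ≥ 1 and let v₀, …, v_k ∈ ℂ^(k+1) satisfy: v_k ≠ 0, and Σ_{j=0}^{k} z^j v_j ≠ 0 for every z ∈ ℂ. For g = [[a,b],[c,d]] ∈ SL(2,ℂ) define the tuple w(g) = (w₀(g), …, w_k(g)) ∈ (ℂ^(k+1))^(k+1) by the polynomial identity Σ_{i=0}^{k} w_i(g) z^i = Σ_{j=0}^{k} (cz+d)^(k−j)(az+b)^j v_j in the variable z. Then the map g ↦ w(g) from SL(2,ℂ) (with its topology as a subset of the 2×2 complex matrices) to (ℂ^(k+1))^(k+1) is a proper map (preimages of compact sets are compact). -/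
set_option maxRecDepth 8000
set_option maxHeartbeats 2000000

open Finset

-- Nonvanishing of the homogenization
lemma aux_F_ne_zero (k : ℕ) (v : Fin (k+1) → EuclideanSpace ℂ (Fin (k+1)))
    (hlast : v (Fin.last k) ≠ 0)
    (hnz : ∀ z : ℂ, ∑ j : Fin (k+1), z ^ (j:ℕ) • v j ≠ 0)
    {x y : ℂ} (h : ¬(x = 0 ∧ y = 0)) :
    ∑ j : Fin (k+1), (y ^ (k - (j:ℕ)) * x ^ (j:ℕ)) • v j ≠ 0 := by
  by_cases hy : y = 0
  · have hx : x ≠ 0 := fun hx => h ⟨hx, hy⟩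
    rw [Finset.sum_eq_single (Fin.last k)]
    · simpa [hy, Fin.last] using smul_ne_zero (pow_ne_zero k hx) hlast
    · intro j _ hj
      have hjk : (j:ℕ) < k := lt_of_le_of_ne (Fin.is_le j)
        (fun hh => hj (Fin.ext (by simpa [Fin.last] using hh)))
      simp [hy, zero_pow (Nat.sub_ne_zero_of_lt hjk)]
    · simp
  · have hyk : (y : ℂ) ^ k ≠ 0 := pow_ne_zero _ hy
    have hsum : ∑ j : Fin (k+1), (y ^ (k - (j:ℕ)) * x ^ (j:ℕ)) • v j
        = y ^ k • ∑ j : Fin (k+1), (x/y) ^ (j:ℕ) • v j := by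
      rw [Finset.smul_sum]
      refine Finset.sum_congr rfl fun j _ => ?_
      rw [smul_smul]
      congr 1
      rw [div_pow, pow_sub₀ y hy (Fin.is_le j)]
      field_simp
    rw [hsum]
    exact smul_ne_zero hyk (hnz (x/y))

-- The quantitative lower bound
lemma aux_eps (k : ℕ) (hk : 1 ≤ k) (v : Fin (k+1) → EuclideanSpace ℂ (Fin (k+1)))
    (hlast : v (Fin.last k) ≠ 0)
    (hnz : ∀ z : ℂ, ∑ j : Fin (k+1), z ^ (j:ℕ) • v j ≠ 0) :
    ∃ ε > 0, ∀ x y : ℂ,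
      ε * max ‖x‖ ‖y‖ ^ k ≤ ‖∑ j : Fin (k+1), (y ^ (k - (j:ℕ)) * x ^ (j:ℕ)) • v j‖ := by
  set F : ℂ × ℂ → EuclideanSpace ℂ (Fin (k+1)) :=
    fun p => ∑ j : Fin (k+1), (p.2 ^ (k - (j:ℕ)) * p.1 ^ (j:ℕ)) • v j with hF
  have hFc : Continuous F := by
    apply continuous_finset_sum
    intro j _
    exact (((continuous_snd.pow _).mul (continuous_fst.pow _))).smul continuous_const
  have hS : IsCompact (Metric.sphere (0 : ℂ × ℂ) 1) := isCompact_sphere _ _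
  have hSne : (Metric.sphere (0 : ℂ × ℂ) 1).Nonempty :=
    NormedSpace.sphere_nonempty.mpr (by norm_num)
  obtain ⟨p₀, hp₀S, hp₀min⟩ := hS.exists_isMinOn hSne (hFc.norm.continuousOn)
  have hp₀ : ‖F p₀‖ > 0 := by
    rw [gt_iff_lt, norm_pos_iff]
    apply aux_F_ne_zero k v hlast hnz
    rintro ⟨h1, h2⟩
    have hp0 : p₀ = 0 := by
      have : p₀ = (p₀.1, p₀.2) := rfl
      rw [this, h1, h2]; rfl
    rw [Metric.mem_sphere, hp0] at hp₀S
    simp at hp₀S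
  refine ⟨‖F p₀‖, hp₀, fun x y => ?_⟩
  rcases eq_or_lt_of_le (le_max_iff.mpr (Or.inl (norm_nonneg x)) : (0:ℝ) ≤ max ‖x‖ ‖y‖) with hr | hr
  · rw [← hr, zero_pow (by omega), mul_zero]
    exact norm_nonneg _
  · set r : ℝ := max ‖x‖ ‖y‖ with hrdef
    have hrne : (r : ℂ) ≠ 0 := by
      simpa using ne_of_gt hr
    set p : ℂ × ℂ := (x / r, y / r) with hp
    have hpS : p ∈ Metric.sphere (0 : ℂ × ℂ) 1 := by
      simp only [Metric.mem_sphere, dist_zero_right, hp, Prod.norm_def]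
      rw [norm_div, norm_div]
      have : ‖(r:ℂ)‖ = r := by
        rw [Complex.norm_real, Real.norm_of_nonneg hr.le]
      rw [this]
      rw [max_div_div_right hr.le, ← hrdef, div_self (ne_of_gt hr)]
    have hFeq : F (x, y) = (r : ℂ) ^ k • F p := by
      rw [hF]
      simp only []
      rw [Finset.smul_sum]
      refine Finset.sum_congr rfl fun j _ => ?_
      rw [smul_smul]
      congr 1
      have hj : (j:ℕ) ≤ k := Fin.is_le j
      rw [div_pow, div_pow]
      rw [show (r:ℂ)^k = (r:ℂ)^(k - (j:ℕ)) * (r:ℂ)^(j:ℕ) by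
        rw [← pow_add, Nat.sub_add_cancel hj]]
      field_simp
    have : ‖F (x, y)‖ = r ^ k * ‖F p‖ := by
      rw [hFeq, norm_smul, norm_pow, Complex.norm_real, Real.norm_of_nonneg hr.le]
    calc ‖F p₀‖ * r ^ k ≤ ‖F p‖ * r ^ k := by
          apply mul_le_mul_of_nonneg_right (hp₀min hpS) (by positivity)
      _ = ‖F (x, y)‖ := by rw [this]; ring


/-- Stability of the coefficient tuple of a based degree-`k` holomorphic map
`ℙ¹ → ℙᵏ`: the orbit map of the lifted linear `SL(2,ℂ)`-action is proper. -/
theorem stmt_1 (k : ℕ) (hk : 1 ≤ k)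
    (v : Fin (k + 1) → EuclideanSpace ℂ (Fin (k + 1)))
    (hlast : v (Fin.last k) ≠ 0)
    (hnz : ∀ z : ℂ, ∑ j : Fin (k + 1), z ^ (j : ℕ) • v j ≠ 0)
    (w : {g : Matrix (Fin 2) (Fin 2) ℂ // g.det = 1} →
      Fin (k + 1) → EuclideanSpace ℂ (Fin (k + 1)))
    (hw : ∀ g : {g : Matrix (Fin 2) (Fin 2) ℂ // g.det = 1}, ∀ z : ℂ,
      ∑ i : Fin (k + 1), z ^ (i : ℕ) • w g i =
        ∑ j : Fin (k + 1),
          ((g.1 1 0 * z + g.1 1 1) ^ (k - (j : ℕ)) *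
            (g.1 0 0 * z + g.1 0 1) ^ (j : ℕ)) • v j) :
    IsProperMap w := by
  classical
  obtain ⟨ε, hε, heps⟩ := aux_eps k hk v hlast hnz
  -- the "evaluation at k+1 points" linear automorphism
  let T : (Fin (k + 1) → EuclideanSpace ℂ (Fin (k + 1))) →ₗ[ℂ]
      (Fin (k + 1) → EuclideanSpace ℂ (Fin (k + 1))) :=
  { toFun := fun u t => ∑ i : Fin (k + 1), ((t : ℕ) : ℂ) ^ (i : ℕ) • u i
    map_add' := by
      intro u1 u2; funext t
      show ∑ i : Fin (k + 1), ((t : ℕ) : ℂ) ^ (i : ℕ) • (u1 i + u2 i)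
          = (∑ i : Fin (k + 1), ((t : ℕ) : ℂ) ^ (i : ℕ) • u1 i)
            + ∑ i : Fin (k + 1), ((t : ℕ) : ℂ) ^ (i : ℕ) • u2 i
      rw [← Finset.sum_add_distrib]
      exact Finset.sum_congr rfl fun i _ => smul_add _ _ _
    map_smul' := by
      intro c u; funext t
      show ∑ i : Fin (k + 1), ((t : ℕ) : ℂ) ^ (i : ℕ) • (c • u i)
          = c • ∑ i : Fin (k + 1), ((t : ℕ) : ℂ) ^ (i : ℕ) • u i
      rw [Finset.smul_sum]
      exact Finset.sum_congr rfl fun i _ => smul_comm _ _ _ }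
  have hTinj : Function.Injective T := by
    intro u1 u2 h12
    have hu : T (u1 - u2) = 0 := by rw [map_sub, h12, sub_self]
    have hzero : u1 - u2 = 0 := by
      funext i
      ext m
      have hfinj : Function.Injective (fun t : Fin (k + 1) => ((t : ℕ) : ℂ)) :=
        fun a b hab => Fin.ext (Nat.cast_inj.mp hab)
      have h2 : ∀ j : Fin (k + 1),
          ∑ i : Fin (k + 1), ((j : ℕ) : ℂ) ^ (i : ℕ) * ((u1 - u2) i m) = 0 := by
        intro j
        have huj : (∑ i : Fin (k + 1), ((j : ℕ) : ℂ) ^ (i : ℕ) • (u1 - u2) i) = 0 :=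
          congrFun hu j
        have := congrArg (EuclideanSpace.proj (𝕜 := ℂ) m) huj
        simpa [map_sum, smul_eq_mul] using this
      have := Matrix.eq_zero_of_forall_index_sum_pow_mul_eq_zero hfinj h2
      have := congrFun this i
      simpa using this
    exact sub_eq_zero.mp hzero
  have hTsurj : Function.Surjective T :=
    LinearMap.injective_iff_surjective.mp hTinj
  let Te := LinearEquiv.ofBijective T ⟨hTinj, hTsurj⟩
  -- the evaluation map
  set E : {g : Matrix (Fin 2) (Fin 2) ℂ // g.det = 1} →
      Fin (k + 1) → EuclideanSpace ℂ (Fin (k + 1)) :=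
    fun g t => ∑ j : Fin (k + 1),
      ((g.1 1 0 * ((t : ℕ) : ℂ) + g.1 1 1) ^ (k - (j : ℕ)) *
        (g.1 0 0 * ((t : ℕ) : ℂ) + g.1 0 1) ^ (j : ℕ)) • v j with hE
  have hent : ∀ i j : Fin 2, Continuous
      (fun g : {g : Matrix (Fin 2) (Fin 2) ℂ // g.det = 1} => g.1 i j) :=
    fun i j => continuous_subtype_val.matrix_elem i j
  have hEc : Continuous E := by
    apply continuous_pi; intro t
    apply continuous_finset_sum; intro j _
    exact ((((((hent 1 0).mul continuous_const).add (hent 1 1)).pow _).mul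
      ((((hent 0 0).mul continuous_const).add (hent 0 1)).pow _))).smul continuous_const
  have hwE : ∀ g, w g = Te.symm (E g) := by
    intro g
    apply Te.injective
    rw [LinearEquiv.apply_symm_apply]
    have : Te (w g) = T (w g) := rfl
    rw [this]
    funext t
    exact hw g ((t : ℕ) : ℂ)
  have hwc : Continuous w := by
    have hc : Continuous fun g => Te.symm (E g) :=
      (Te.symm.toLinearMap.continuous_of_finiteDimensional).comp hEc
    rw [show w = fun g => Te.symm (E g) from funext hwE]
    exact hc
  rw [isProperMap_iff_isCompact_preimage]
  refine ⟨hwc, fun K hK => ?_⟩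
  obtain ⟨R0, hR0⟩ := hK.isBounded.subset_closedBall 0
  set R : ℝ := max R0 0 with hRdef
  have hRK : ∀ u ∈ K, ∀ i, ‖u i‖ ≤ R := by
    intro u hu i
    refine le_trans (norm_le_pi_norm u i) (le_trans ?_ (le_max_left _ _))
    simpa [mem_closedBall_zero_iff] using hR0 hu
  set M : ℝ := max 1 ((k + 1) * R / ε) with hMdef
  have hM1 : (1 : ℝ) ≤ M := le_max_left _ _
  have hgb : ∀ g ∈ w ⁻¹' K, ∀ i j : Fin 2, ‖g.1 i j‖ ≤ 2 * M := by
    intro g hg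
    have key : ∀ z : ℂ, ‖z‖ ≤ 1 →
        max ‖g.1 0 0 * z + g.1 0 1‖ ‖g.1 1 0 * z + g.1 1 1‖ ≤ M := by
      intro z hz
      set m := max ‖g.1 0 0 * z + g.1 0 1‖ ‖g.1 1 0 * z + g.1 1 1‖ with hm
      have h1 : ε * m ^ k ≤ (k + 1) * R := by
        calc ε * m ^ k
            ≤ ‖∑ j : Fin (k + 1), ((g.1 1 0 * z + g.1 1 1) ^ (k - (j : ℕ)) *
                (g.1 0 0 * z + g.1 0 1) ^ (j : ℕ)) • v j‖ := heps _ _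
          _ = ‖∑ i : Fin (k + 1), z ^ (i : ℕ) • w g i‖ := by rw [hw g z]
          _ ≤ ∑ i : Fin (k + 1), ‖z ^ (i : ℕ) • w g i‖ := norm_sum_le _ _
          _ ≤ ∑ _i : Fin (k + 1), R := by
              apply Finset.sum_le_sum; intro i _
              rw [norm_smul, norm_pow]
              calc ‖z‖ ^ (i : ℕ) * ‖w g i‖ ≤ 1 * R :=
                    mul_le_mul (pow_le_one₀ (norm_nonneg z) hz) (hRK _ hg i)
                      (norm_nonneg _) zero_le_one
                _ = R := one_mul R
          _ = (k + 1) * R := by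
              rw [Finset.sum_const, Finset.card_univ, Fintype.card_fin, nsmul_eq_mul]
              push_cast; ring
      have h2 : m ^ k ≤ (k + 1) * R / ε := by
        rw [le_div_iff₀ hε, mul_comm]; exact h1
      rcases le_total m 1 with h | h
      · exact h.trans hM1
      · exact ((le_self_pow₀ h (by omega)).trans h2).trans (le_max_right _ _)
    have k0 := key 0 (by simp)
    have k1 := key 1 (by simp)
    rw [max_le_iff] at k0 k1
    have hb01 : ‖g.1 0 1‖ ≤ M := by simpa using k0.1
    have hb11 : ‖g.1 1 1‖ ≤ M := by simpa using k0.2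
    have hs0 : ‖g.1 0 0 + g.1 0 1‖ ≤ M := by simpa using k1.1
    have hs1 : ‖g.1 1 0 + g.1 1 1‖ ≤ M := by simpa using k1.2
    have hb00 : ‖g.1 0 0‖ ≤ 2 * M := by
      have h : g.1 0 0 = (g.1 0 0 + g.1 0 1) - g.1 0 1 := by ring
      rw [h]
      exact (norm_sub_le _ _).trans (by linarith)
    have hb10 : ‖g.1 1 0‖ ≤ 2 * M := by
      have h : g.1 1 0 = (g.1 1 0 + g.1 1 1) - g.1 1 1 := by ring
      rw [h]
      exact (norm_sub_le _ _).trans (by linarith)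
    intro i j
    fin_cases i <;> fin_cases j <;> first
      | exact hb00 | exact hb10
      | exact hb01.trans (by linarith) | exact hb11.trans (by linarith)
  -- compactness of the preimage
  have hdet : IsClosed {g : Matrix (Fin 2) (Fin 2) ℂ | g.det = 1} :=
    isClosed_eq (Continuous.matrix_det continuous_id) continuous_const
  rw [Subtype.isCompact_iff]
  have hclP : IsClosed (w ⁻¹' K) := hK.isClosed.preimage hwc
  have himcl : IsClosed (Subtype.val '' (w ⁻¹' K)) :=
    (hdet.isClosedEmbedding_subtypeVal).isClosedMap _ hclP
  have hQ : IsCompact (Set.pi Set.univ (fun _ : Fin 2 =>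
      Set.pi Set.univ fun _ : Fin 2 => Metric.closedBall (0 : ℂ) (2 * M)) :
        Set (Matrix (Fin 2) (Fin 2) ℂ)) :=
    isCompact_univ_pi fun _ => isCompact_univ_pi fun _ => isCompact_closedBall _ _
  apply hQ.of_isClosed_subset himcl
  rintro m ⟨g, hg, rfl⟩
  intro i _
  intro j _
  simpa [Metric.mem_closedBall, dist_zero_right] using hgb g hg i j
end

section
/- Let k ≥ 1, let v₀, …, v_k ∈ ℂ^(k+1), and let θ ∈ ℝ. (i) The derivative at t = 0 of the function t ↦ Σ_{j=0}^{k} e^(2(2j−k)t) ‖v_j‖² equals 2 Σ_{j=0}^{k} (2j−k) ‖v_j‖². (ii) For t ∈ ℝ define w_i(t) ∈ ℂ^(k+1) by w_i(t) = Σ_{j=i}^{k} (C(k,j)/C(k,i))^(1/2) · C(j,i) · (t e^(iθ))^(j−i) · v_j, so that Σ_i C(k,i)^(1/2) w_i(t) z^i = Σ_j C(k,j)^(1/2) v_j (z + t e^(iθ))^j as polynomials in z. Then the derivative at t = 0 of t ↦ Σ_{i=0}^{k} ‖w_i(t)‖² equals 2 Re( e^(iθ) Σ_{j=0}^{k−1}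 ((j+1)(k−j))^(1/2) ⟨v_j, v_{j+1}⟩ ). -/
lemma term_deriv (c e : ℂ) (m : ℕ) :
    HasDerivAt (fun t : ℝ => c * ((t : ℂ) * e) ^ m) (if m = 1 then c * e else 0) 0 := by
  have h2 : HasDerivAt (fun z : ℂ => c * (z * e) ^ m)
      (c * ((m : ℂ) * ((0 : ℂ) * e) ^ (m - 1) * (1 * e))) 0 :=
    (((hasDerivAt_id (0 : ℂ)).mul_const e).pow m).const_mul c
  have h3 := h2.comp_ofReal (z := 0)
  convert h3 using 1
  rcases m with _ | _ | m <;> simp [pow_succ]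

section
variable {k : ℕ} (v : Fin (k + 1) → EuclideanSpace ℂ (Fin (k + 1))) (e : ℂ)

noncomputable def cf (k i j : ℕ) : ℂ :=
  ((Real.sqrt ((k.choose j : ℝ) / (k.choose i : ℝ)) * ((j).choose i : ℝ) : ℝ) : ℂ)

lemma key_deriv (i : Fin (k + 1)) :
    HasDerivAt (fun t : ℝ => ∑ j : Fin (k + 1),
        if (i : ℕ) ≤ (j : ℕ) then
          (cf k i j * ((t : ℂ) * e) ^ ((j : ℕ) - (i : ℕ))) • v j else 0)
      (∑ j : Fin (k + 1),
        if (j : ℕ) = (i : ℕ) + 1 then (cf k i j * e) • v j else 0) 0 := by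
  apply HasDerivAt.fun_sum
  intro j _
  by_cases hij : (i : ℕ) ≤ (j : ℕ)
  · simp only [if_pos hij]
    have h := (term_deriv (cf k i j) e ((j : ℕ) - (i : ℕ))).smul_const (v j)
    convert h using 1
    by_cases h1 : (j : ℕ) = (i : ℕ) + 1
    · have : (j : ℕ) - (i : ℕ) = 1 := by omega
      simp [h1, this]
    · have : (j : ℕ) - (i : ℕ) ≠ 1 := by omega
      simp [h1, this]
  · simp only [if_neg hij]
    have h1 : ¬((j : ℕ) = (i : ℕ) + 1) := by omega
    simp only [if_neg h1]
    exact hasDerivAt_const 0 0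

lemma f_zero (i : Fin (k + 1)) :
    (∑ j : Fin (k + 1),
        if (i : ℕ) ≤ (j : ℕ) then
          (cf k i j * (((0:ℝ) : ℂ) * e) ^ ((j : ℕ) - (i : ℕ))) • v j else 0) = v i := by
  rw [Finset.sum_eq_single i]
  · have hne : (k.choose (i : ℕ) : ℝ) ≠ 0 :=
      Nat.cast_ne_zero.mpr (Nat.choose_pos i.is_le).ne'
    simp [cf, div_self hne]
  · intro j _ hj
    by_cases hij : (i : ℕ) ≤ (j : ℕ)
    · have hm : (j : ℕ) - (i : ℕ) ≠ 0 := by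
        have := Fin.val_ne_of_ne hj; omega
      simp [hij, zero_pow hm]
    · simp [hij]
  · simp

end

section
variable {k : ℕ} (v : Fin (k + 1) → EuclideanSpace ℂ (Fin (k + 1))) (e : ℂ)

local notation "⟪" x ", " y "⟫" => @inner ℂ _ _ x y

lemma normsq_deriv (i : Fin (k + 1)) :
    HasDerivAt (fun t : ℝ => ‖∑ j : Fin (k + 1),
        if (i : ℕ) ≤ (j : ℕ) then
          (cf k i j * ((t : ℂ) * e) ^ ((j : ℕ) - (i : ℕ))) • v j else 0‖ ^ 2)
      (2 * (⟪v i, ∑ j : Fin (k + 1),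
        if (j : ℕ) = (i : ℕ) + 1 then (cf k i j * e) • v j else 0⟫).re) 0 := by
  set D := ∑ j : Fin (k + 1),
    if (j : ℕ) = (i : ℕ) + 1 then (cf k i j * e) • v j else 0 with hD
  have hi := (key_deriv v e i).inner ℂ (key_deriv v e i)
  have h2 := Complex.reCLM.hasFDerivAt.comp_hasDerivAt 0 hi
  have hfun : (fun t : ℝ => ‖∑ j : Fin (k + 1),
        if (i : ℕ) ≤ (j : ℕ) then
          (cf k i j * ((t : ℂ) * e) ^ ((j : ℕ) - (i : ℕ))) • v j else 0‖ ^ 2)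
      = fun t : ℝ => Complex.reCLM (⟪∑ j : Fin (k + 1),
        if (i : ℕ) ≤ (j : ℕ) then
          (cf k i j * ((t : ℂ) * e) ^ ((j : ℕ) - (i : ℕ))) • v j else 0,
        ∑ j : Fin (k + 1),
        if (i : ℕ) ≤ (j : ℕ) then
          (cf k i j * ((t : ℂ) * e) ^ ((j : ℕ) - (i : ℕ))) • v j else 0⟫) := by
    funext t
    rw [norm_sq_eq_re_inner (𝕜 := ℂ)]
    rfl
  rw [hfun]
  refine h2.congr_deriv ?_
  rw [f_zero v e i]
  rw [← hD]
  have : ⟪D, v i⟫ = (starRingEnd ℂ) ⟪v i, D⟫ := (inner_conj_symm _ _).symm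
  rw [Complex.reCLM_apply, Complex.add_re, this, Complex.conj_re]
  ring
end

lemma ccoef {k n : ℕ} (hn : n < k) :
    Real.sqrt ((k.choose (n + 1) : ℝ) / (k.choose n : ℝ)) * (((n + 1).choose n : ℕ) : ℝ)
      = Real.sqrt (((n : ℝ) + 1) * ((k : ℝ) - (n : ℝ))) := by
  have hpos : (0 : ℝ) < k.choose n := by exact_mod_cast Nat.choose_pos hn.le
  have hc : (k.choose (n + 1) : ℝ) * ((n : ℝ) + 1) = (k.choose n : ℝ) * ((k : ℝ) - n) := by
    have h := Nat.choose_succ_right_eq k n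
    have h2 := congrArg (Nat.cast : ℕ → ℝ) h
    push_cast [Nat.cast_sub hn.le] at h2
    linarith [h2]
  have key : (k.choose (n + 1) : ℝ) / (k.choose n : ℝ) * ((n : ℝ) + 1) ^ 2
      = ((n : ℝ) + 1) * ((k : ℝ) - (n : ℝ)) := by
    rw [div_mul_eq_mul_div, div_eq_iff hpos.ne']
    linear_combination ((n : ℝ) + 1) * hc
  rw [Nat.choose_succ_self_right]
  push_cast
  rw [← key, Real.sqrt_mul (by positivity), Real.sqrt_sq (by positivity)]

section
variable {k : ℕ} (v : Fin (k + 1) → EuclideanSpace ℂ (Fin (k + 1))) (e : ℂ)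

lemma D_eq (j0 : Fin k) :
    (∑ j : Fin (k + 1),
        if (j : ℕ) = ((j0.castSucc : Fin (k + 1)) : ℕ) + 1 then
          (cf k (j0.castSucc : Fin (k + 1)) j * e) • v j else 0)
      = (cf k (j0 : ℕ) ((j0 : ℕ) + 1) * e) • v j0.succ := by
  rw [Finset.sum_eq_single j0.succ]
  · simp
  · intro j _ hj
    have : (j : ℕ) ≠ (j0 : ℕ) + 1 := by
      simpa [Fin.ext_iff] using hj
    simp [Fin.coe_castSucc, this]
  · simp

lemma D_last :
    (∑ j : Fin (k + 1),
        if (j : ℕ) = ((Fin.last k : Fin (k + 1)) : ℕ) + 1 then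
          (cf k (Fin.last k : Fin (k + 1)) j * e) • v j else 0) = 0 := by
  apply Finset.sum_eq_zero
  intro j _
  have : (j : ℕ) ≠ k + 1 := by omega
  simp [this]
end

section
variable {k : ℕ} (v : Fin (k + 1) → EuclideanSpace ℂ (Fin (k + 1))) (e : ℂ)

lemma final_sum :
    ∑ i : Fin (k + 1), 2 * (inner ℂ (v i) (∑ j : Fin (k + 1),
        if (j : ℕ) = (i : ℕ) + 1 then (cf k i j * e) • v j else 0) : ℂ).re
      = 2 * (e * ∑ j : Fin k,
          ((Real.sqrt ((((j : ℕ) : ℝ) + 1) * ((k : ℝ) - ((j : ℕ) : ℝ))) : ℝ) : ℂ) *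
            inner ℂ (v j.castSucc) (v j.succ)).re := by
  rw [Fin.sum_univ_castSucc, D_last v e]
  simp only [inner_zero_right, Complex.zero_re, mul_zero, add_zero]
  rw [Finset.mul_sum, Complex.re_sum, Finset.mul_sum]
  apply Finset.sum_congr rfl
  intro j0 _
  rw [D_eq v e j0, inner_smul_right]
  have hc : cf k (j0 : ℕ) ((j0 : ℕ) + 1)
      = ((Real.sqrt ((((j0 : ℕ) : ℝ) + 1) * ((k : ℝ) - ((j0 : ℕ) : ℝ))) : ℝ) : ℂ) := by
    have h := ccoef (n := (j0 : ℕ)) j0.isLt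
    unfold cf
    exact_mod_cast congrArg (Complex.ofReal) h
  rw [hc]
  congr 1
  exact congrArg Complex.re (by ring)

end

lemma part1 (k : ℕ) (v : Fin (k + 1) → EuclideanSpace ℂ (Fin (k + 1))) :
    deriv (fun t : ℝ => ∑ j : Fin (k + 1),
        Real.exp (2 * (2 * (j : ℝ) - (k : ℝ)) * t) * ‖v j‖ ^ 2) 0 =
      2 * ∑ j : Fin (k + 1), (2 * (j : ℝ) - (k : ℝ)) * ‖v j‖ ^ 2 := by
  have h : ∀ j : Fin (k+1), HasDerivAt
      (fun t : ℝ => Real.exp (2 * (2 * (j : ℝ) - (k : ℝ)) * t) * ‖v j‖ ^ 2)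
      ((2 * (2 * (j:ℝ) - (k:ℝ))) * ‖v j‖ ^ 2) 0 := by
    intro j
    have := (((hasDerivAt_id (0:ℝ)).const_mul (2 * (2 * (j : ℝ) - (k : ℝ)))).exp).mul_const
      (‖v j‖ ^ 2)
    simpa using this
  rw [(HasDerivAt.fun_sum (fun j _ => h j)).deriv, Finset.mul_sum]
  exact Finset.sum_congr rfl fun j _ => by ring

set_option maxHeartbeats 400000 in
/-- The two components of the moment map computation for the `SU(2)`-action on
coefficient tuples `(v₀, …, v_k)`: (i) the infinitesimal action of the diagonal
generator, (ii) the infinitesimal action of the nilpotent generator `e_θ`. -/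
theorem stmt_2 (k : ℕ) (hk : 1 ≤ k)
    (v : Fin (k + 1) → EuclideanSpace ℂ (Fin (k + 1))) (θ : ℝ) :
    deriv (fun t : ℝ => ∑ j : Fin (k + 1),
        Real.exp (2 * (2 * (j : ℝ) - (k : ℝ)) * t) * ‖v j‖ ^ 2) 0 =
      2 * ∑ j : Fin (k + 1), (2 * (j : ℝ) - (k : ℝ)) * ‖v j‖ ^ 2 ∧
    deriv (fun t : ℝ => ∑ i : Fin (k + 1),
        ‖∑ j : Fin (k + 1),
            if (i : ℕ) ≤ (j : ℕ) then
              (((Real.sqrt ((k.choose (j : ℕ) : ℝ) / (k.choose (i : ℕ) : ℝ)) *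
                  ((j : ℕ).choose (i : ℕ) : ℝ) : ℝ) : ℂ) *
                (↑t * Complex.exp (↑θ * Complex.I)) ^ ((j : ℕ) - (i : ℕ))) • v j
            else 0‖ ^ 2) 0 =
      2 * (Complex.exp (↑θ * Complex.I) *
        ∑ j : Fin k, ((Real.sqrt (((j : ℕ) + 1) * (k - (j : ℕ))) : ℝ) : ℂ) *
          inner ℂ (v j.castSucc) (v j.succ)).re := by
  constructor
  · exact part1 k v
  · have hT := HasDerivAt.fun_sum (u := (Finset.univ : Finset (Fin (k + 1))))
      (fun i _ => normsq_deriv v (Complex.exp (↑θ * Complex.I)) i)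
    have hd := hT.deriv
    simp only [cf] at hd
    rw [hd]
    have hfs := final_sum v (Complex.exp (↑θ * Complex.I))
    simp only [cf] at hfs
    exact hfs
end

section
/- Define B : (ℝ³)³ → (ℝ³)³ by B(r₁, r₂, r₃) = (2 r₂ × r₃, 2 r₃ × r₁, 2 r₁ × r₂). Then for all r₁, r₂, r₃ ∈ ℝ³, B(B(r₁, r₂, r₃)) = (8 ⟨r₁, r₂ × r₃⟩) • (r₁, r₂, r₃), i.e. applying B twice multiplies each component by the scalar 8 det(r₁, r₂, r₃). -/
open scoped Matrix

/-- The bracket map `ν ↦ [ν,ν]` on `su(2) ⊗ su(2)`, written in terms of triples of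
vectors in `ℝ³` under the identification of `su(2)` with `(ℝ³, ×)`. -/
def bracketMap (p : (Fin 3 → ℝ) × (Fin 3 → ℝ) × (Fin 3 → ℝ)) :
    (Fin 3 → ℝ) × (Fin 3 → ℝ) × (Fin 3 → ℝ) :=
  ((2 : ℝ) • (p.2.1 ⨯₃ p.2.2), (2 : ℝ) • (p.2.2 ⨯₃ p.1), (2 : ℝ) • (p.1 ⨯₃ p.2.1))

/-- Applying the bracket map twice multiplies each component by `8 det(r₁,r₂,r₃)`:
the identity `[[ν,ν],[ν,ν]] = 8 ⟨r₁, [r₂,r₃]⟩ ν`. -/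
theorem stmt_4 (r₁ r₂ r₃ : Fin 3 → ℝ) :
    bracketMap (bracketMap (r₁, r₂, r₃)) =
      (8 * (r₁ ⬝ᵥ (r₂ ⨯₃ r₃))) • (r₁, r₂, r₃) := by
  simp only [bracketMap, Prod.smul_mk, Prod.mk.injEq]
  refine ⟨?_, ?_, ?_⟩ <;> funext i <;> fin_cases i <;>
    simp [crossProduct, dotProduct, Matrix.vecHead, Matrix.vecTail,
      Fin.sum_univ_three] <;> ring
end

section
/- Let r₁, r₂, r₃ ∈ ℝ³ satisfy 2 r₂ × r₃ = r₁, 2 r₃ × r₁ = r₂ and 2 r₁ × r₂ = r₃, and suppose r₁ ≠ 0. Then r₁, r₂, r₃ are pairwise orthogonal and ‖r₁‖ = ‖r₂‖ = ‖r₃‖ = 1/2. -/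
open scoped Matrix

/-- Fixed points of the bracket map `B(r₁,r₂,r₃) = (2 r₂×r₃, 2 r₃×r₁, 2 r₁×r₂)`:
a nonzero fixed point is a pairwise orthogonal triple of vectors of norm `1/2`. -/
theorem stmt_5 (r₁ r₂ r₃ : Fin 3 → ℝ)
    (h₁ : (2 : ℝ) • (r₂ ⨯₃ r₃) = r₁)
    (h₂ : (2 : ℝ) • (r₃ ⨯₃ r₁) = r₂)
    (h₃ : (2 : ℝ) • (r₁ ⨯₃ r₂) = r₃)
    (hne : r₁ ≠ 0) :
    r₁ ⬝ᵥ r₂ = 0 ∧ r₁ ⬝ᵥ r₃ = 0 ∧ r₂ ⬝ᵥ r₃ = 0 ∧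
    ‖(EuclideanSpace.equiv (Fin 3) ℝ).symm r₁‖ = 1 / 2 ∧
    ‖(EuclideanSpace.equiv (Fin 3) ℝ).symm r₂‖ = 1 / 2 ∧
    ‖(EuclideanSpace.equiv (Fin 3) ℝ).symm r₃‖ = 1 / 2 := by
  have o12 : r₁ ⬝ᵥ r₂ = 0 := by
    rw [← h₂, dotProduct_smul, dot_cross_self, smul_zero]
  have o13 : r₁ ⬝ᵥ r₃ = 0 := by
    rw [← h₃, dotProduct_smul, dot_self_cross, smul_zero]
  have o23 : r₂ ⬝ᵥ r₃ = 0 := by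
    rw [← h₃, dotProduct_smul, dot_cross_self, smul_zero]
  set x := r₁ ⬝ᵥ r₁ with hx
  set y := r₂ ⬝ᵥ r₂ with hy
  set z := r₃ ⬝ᵥ r₃ with hz
  have nonneg : ∀ r : Fin 3 → ℝ, 0 ≤ r ⬝ᵥ r := fun r =>
    Finset.sum_nonneg fun i _ => mul_self_nonneg (r i)
  have e1 : x = 4 * (y * z) := by
    rw [hx, ← h₁, smul_dotProduct, dotProduct_smul, cross_dot_cross,
      dotProduct_comm r₃ r₂, o23, smul_eq_mul, smul_eq_mul]
    ring
  have e2 : y = 4 * (z * x) := by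
    rw [hy, ← h₂, smul_dotProduct, dotProduct_smul, cross_dot_cross,
      dotProduct_comm r₃ r₁, o13, smul_eq_mul, smul_eq_mul]
    ring
  have e3 : z = 4 * (x * y) := by
    rw [hz, ← h₃, smul_dotProduct, dotProduct_smul, cross_dot_cross,
      dotProduct_comm r₂ r₁, o12, smul_eq_mul, smul_eq_mul]
    ring
  have hxpos : 0 < x := by
    have : x ≠ 0 := fun h => hne (by
      have := (dotProduct_self_eq_zero (v := r₁)).mp (by rw [← hx, h])
      exact this)
    have hnn : 0 ≤ x := nonneg r₁
    exact lt_of_le_of_ne hnn (Ne.symm this)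
  have hynn : 0 ≤ y := nonneg r₂
  have hznn : 0 ≤ z := nonneg r₃
  have hxy : x = y := by nlinarith
  have hxz : x = z := by nlinarith
  have hx14 : x = 1 / 4 := by nlinarith
  have key : ∀ r : Fin 3 → ℝ, r ⬝ᵥ r = 1 / 4 →
      ‖(EuclideanSpace.equiv (Fin 3) ℝ).symm r‖ = 1 / 2 := by
    intro r hr
    have : ‖(EuclideanSpace.equiv (Fin 3) ℝ).symm r‖ = Real.sqrt (r ⬝ᵥ r) := by
      rw [EuclideanSpace.norm_eq, dotProduct]
      congr 1
      refine Finset.sum_congr rfl fun i _ => ?_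
      simp [Real.norm_eq_abs, sq_abs, sq]
    rw [this, hr]
    rw [show (1 : ℝ) / 4 = (1 / 2 : ℝ) ^ 2 by norm_num, Real.sqrt_sq (by norm_num)]
  exact ⟨o12, o13, o23, key r₁ hx14, key r₂ (by rw [← hy, ← hxy, hx14]),
    key r₃ (by rw [← hz, ← hxz, hx14])⟩
end

section
/- Let r₀, r₁, r₂ ∈ ℝ³ and for t ∈ ℝ set r₀(t) = r₀ + t (r₁ × r₂), r₁(t) = r₁ + t (r₂ × r₀), r₂(t) = r₂ + t (r₀ × r₁). Then each of the following real-valued functions of t has derivative 0 at t = 0: (a) ⟨r₂(t), r₂(t)⟩ − ⟨r₀(t), r₀(t)⟩; (b) ⟨r₀(t), r₂(t)⟩; (c) ⟨r₀(t), r₁(t)⟩; (d) ⟨r₂(t), r₁(t)⟩; (e) ⟨r₀(t), r₀(t)⟩ + ⟨r₂(t), r₂(t)⟩ − 2⟨r₁(t), r₁(t)⟩. -/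
open scoped Matrix

private lemma hd_aux (a b c d : Fin 3 → ℝ) :
    HasDerivAt (fun t : ℝ => (a + t • b) ⬝ᵥ (c + t • d)) (a ⬝ᵥ d + b ⬝ᵥ c) 0 := by
  have heq : (fun t : ℝ => (a + t • b) ⬝ᵥ (c + t • d)) =
      fun t : ℝ => a ⬝ᵥ c + t * (a ⬝ᵥ d + b ⬝ᵥ c) + t ^ 2 * (b ⬝ᵥ d) := by
    funext t
    simp [dotProduct, Fin.sum_univ_three]
    ring
  rw [heq]
  have h : HasDerivAt (fun t : ℝ => a ⬝ᵥ c + t * (a ⬝ᵥ d + b ⬝ᵥ c) + t ^ 2 * (b ⬝ᵥ d))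
      (0 + 1 * (a ⬝ᵥ d + b ⬝ᵥ c) + ((2 : ℕ) * (0 : ℝ) ^ 1) * (b ⬝ᵥ d)) 0 :=
    ((hasDerivAt_const 0 (a ⬝ᵥ c)).add ((hasDerivAt_id 0).mul_const _)).add
      ((hasDerivAt_pow 2 0).mul_const _)
  simpa using h

/-- Infinitesimal invariance of the coefficients of the degree-4 polynomial cutting out
the intersection of the spectral curve with the diagonal, under the flow `ν ↦ ν + t[ν,ν]`. -/
theorem stmt_6 (r₀ r₁ r₂ : Fin 3 → ℝ) :
    deriv (fun t : ℝ =>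
      (r₂ + t • (r₀ ⨯₃ r₁)) ⬝ᵥ (r₂ + t • (r₀ ⨯₃ r₁)) -
      (r₀ + t • (r₁ ⨯₃ r₂)) ⬝ᵥ (r₀ + t • (r₁ ⨯₃ r₂))) 0 = 0 ∧
    deriv (fun t : ℝ =>
      (r₀ + t • (r₁ ⨯₃ r₂)) ⬝ᵥ (r₂ + t • (r₀ ⨯₃ r₁))) 0 = 0 ∧
    deriv (fun t : ℝ =>
      (r₀ + t • (r₁ ⨯₃ r₂)) ⬝ᵥ (r₁ + t • (r₂ ⨯₃ r₀))) 0 = 0 ∧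
    deriv (fun t : ℝ =>
      (r₂ + t • (r₀ ⨯₃ r₁)) ⬝ᵥ (r₁ + t • (r₂ ⨯₃ r₀))) 0 = 0 ∧
    deriv (fun t : ℝ =>
      (r₀ + t • (r₁ ⨯₃ r₂)) ⬝ᵥ (r₀ + t • (r₁ ⨯₃ r₂)) +
      (r₂ + t • (r₀ ⨯₃ r₁)) ⬝ᵥ (r₂ + t • (r₀ ⨯₃ r₁)) -
      2 * ((r₁ + t • (r₂ ⨯₃ r₀)) ⬝ᵥ (r₁ + t • (r₂ ⨯₃ r₀)))) 0 = 0 := by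
  refine ⟨?_, ?_, ?_, ?_, ?_⟩
  · rw [((hd_aux r₂ (r₀ ⨯₃ r₁) r₂ (r₀ ⨯₃ r₁)).fun_sub
      (hd_aux r₀ (r₁ ⨯₃ r₂) r₀ (r₁ ⨯₃ r₂))).deriv]
    simp [crossProduct, dotProduct, Fin.sum_univ_three]; ring
  · rw [(hd_aux r₀ (r₁ ⨯₃ r₂) r₂ (r₀ ⨯₃ r₁)).deriv]
    simp [crossProduct, dotProduct, Fin.sum_univ_three]; ring
  · rw [(hd_aux r₀ (r₁ ⨯₃ r₂) r₁ (r₂ ⨯₃ r₀)).deriv]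
    simp [crossProduct, dotProduct, Fin.sum_univ_three]; ring
  · rw [(hd_aux r₂ (r₀ ⨯₃ r₁) r₁ (r₂ ⨯₃ r₀)).deriv]
    simp [crossProduct, dotProduct, Fin.sum_univ_three]; ring
  · rw [(((hd_aux r₀ (r₁ ⨯₃ r₂) r₀ (r₁ ⨯₃ r₂)).fun_add
      (hd_aux r₂ (r₀ ⨯₃ r₁) r₂ (r₀ ⨯₃ r₁))).fun_sub
      ((hd_aux r₁ (r₂ ⨯₃ r₀) r₁ (r₂ ⨯₃ r₀)).const_mul 2)).deriv]
    simp [crossProduct, dotProduct, Fin.sum_univ_three]; ring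
end

section
/- Let ψ : ℂ* × ℂ* → ℂ be continuous, let c ∈ ℂ, and suppose that ψ(−1/conj(z), −1/conj(w)) = c · conj(ψ(w, z)) for all w, z ∈ ℂ*, and that ψ(−1/conj(z), z) ≠ 0 for all z ∈ ℂ*. Then |c| = 1, and there exist θ ∈ ℝ and ε ∈ {1, −1} such that the function φ = ε e^(−iθ) ψ satisfies both φ(−1/conj(z), −1/conj(w)) = conj(φ(w, z)) for all w, z ∈ ℂ*, and φ(−1/conj(z), z) is a real number with φ(−1/conj(z), z) > 0 for every z ∈ ℂ*. -/
open scoped ComplexConjugate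

/-- Normalization of the defining polynomial of a spectral curve: if the zero set of `ψ`
is invariant under the real structure and misses the antidiagonal, then `|c| = 1` and
after multiplying by a unimodular constant (and possibly a sign) `ψ` becomes
real-symmetric and positive on the antidiagonal. -/
theorem stmt_10 (ψ : ℂ × ℂ → ℂ) (c : ℂ)
    (hcont : ContinuousOn ψ {p : ℂ × ℂ | p.1 ≠ 0 ∧ p.2 ≠ 0})
    (hreal : ∀ w z : ℂ, w ≠ 0 → z ≠ 0 →
      ψ (-1 / conj z, -1 / conj w) = c * conj (ψ (w, z)))
    (hnz : ∀ z : ℂ, z ≠ 0 → ψ (-1 / conj z, z) ≠ 0) :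
    ‖c‖ = 1 ∧ ∃ θ : ℝ, ∃ ε : ℝ, (ε = 1 ∨ ε = -1) ∧
      (∀ w z : ℂ, w ≠ 0 → z ≠ 0 →
        (ε : ℂ) * Complex.exp (-(θ : ℂ) * Complex.I) * ψ (-1 / conj z, -1 / conj w) =
          conj ((ε : ℂ) * Complex.exp (-(θ : ℂ) * Complex.I) * ψ (w, z))) ∧
      (∀ z : ℂ, z ≠ 0 →
        ((ε : ℂ) * Complex.exp (-(θ : ℂ) * Complex.I) * ψ (-1 / conj z, z)).im = 0 ∧
        0 < ((ε : ℂ) * Complex.exp (-(θ : ℂ) * Complex.I) * ψ (-1 / conj z, z)).re) := by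
  have hconj_ne : ∀ z : ℂ, z ≠ 0 → conj z ≠ 0 := fun z hz => by simpa using hz
  have hane : ∀ z : ℂ, z ≠ 0 → (-1 / conj z : ℂ) ≠ 0 := fun z hz =>
    div_ne_zero (by norm_num) (hconj_ne z hz)
  have hinv : ∀ z : ℂ, z ≠ 0 → -1 / conj (-1 / conj z) = z := by
    intro z hz
    have h := hconj_ne z hz
    field_simp
    simp
  have h11 : ψ (-1, 1) ≠ 0 := by
    have := hnz 1 one_ne_zero
    simpa using this
  have hc1 : ψ (-1, 1) = c * conj (ψ (-1, 1)) := by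
    have := hreal (-1) 1 (by norm_num) one_ne_zero
    norm_num [map_one, map_neg] at this
    exact this
  have hcabs : ‖c‖ = 1 := by
    have hn := congrArg norm hc1
    rw [norm_mul, RCLike.norm_conj] at hn
    have hψ : ‖ψ (-1, 1)‖ ≠ 0 := norm_ne_zero_iff.mpr h11
    have : ‖c‖ * ‖ψ (-1, 1)‖ = 1 * ‖ψ (-1, 1)‖ := by rw [one_mul]; linarith
    exact mul_right_cancel₀ hψ this
  refine ⟨hcabs, ?_⟩
  set θ : ℝ := c.arg / 2 with hθ
  set e : ℂ := Complex.exp (-(θ : ℂ) * Complex.I) with he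
  have hcexp : c = Complex.exp ((c.arg : ℂ) * Complex.I) := by
    conv_lhs => rw [← Complex.norm_mul_exp_arg_mul_I c]
    have : ((‖c‖ : ℝ) : ℂ) = 1 := by
      rw [hcabs]; norm_num
    rw [this, one_mul]
  have hkey : e * c = Complex.exp ((θ : ℂ) * Complex.I) := by
    rw [he, hcexp, ← Complex.exp_add]
    congr 1
    have : (c.arg : ℂ) = 2 * (θ : ℂ) := by
      rw [hθ]; push_cast; ring
    rw [this]; ring
  have hconj_e : conj e = Complex.exp ((θ : ℂ) * Complex.I) := by
    rw [he, ← Complex.exp_conj]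
    congr 1
    simp [Complex.conj_I]
  have hsym : ∀ (ε : ℝ) (w z : ℂ), w ≠ 0 → z ≠ 0 →
      (ε : ℂ) * e * ψ (-1 / conj z, -1 / conj w) = conj ((ε : ℂ) * e * ψ (w, z)) := by
    intro ε w z hw hz
    rw [hreal w z hw hz, map_mul, map_mul, Complex.conj_ofReal, hconj_e]
    calc (ε : ℂ) * e * (c * conj (ψ (w, z)))
        = (ε : ℂ) * (e * c) * conj (ψ (w, z)) := by ring
      _ = (ε : ℂ) * Complex.exp ((θ : ℂ) * Complex.I) * conj (ψ (w, z)) := by rw [hkey]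
  have hrealdiag : ∀ z : ℂ, z ≠ 0 → (e * ψ (-1 / conj z, z)).im = 0 := by
    intro z hz
    have h := hsym 1 (-1 / conj z) z (hane z hz) hz
    rw [hinv z hz] at h
    simp only [Complex.ofReal_one, one_mul] at h
    exact Complex.conj_eq_iff_im.mp h.symm
  have hnzd : ∀ z : ℂ, z ≠ 0 → e * ψ (-1 / conj z, z) ≠ 0 := fun z hz =>
    mul_ne_zero (Complex.exp_ne_zero _) (hnz z hz)
  have hrene : ∀ z : ℂ, z ≠ 0 → (e * ψ (-1 / conj z, z)).re ≠ 0 := by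
    intro z hz hre
    exact hnzd z hz (Complex.ext hre (hrealdiag z hz))
  -- continuity of g
  set g : ℂ → ℝ := fun z => (e * ψ (-1 / conj z, z)).re with hg
  have hgcont : ContinuousOn g {z : ℂ | z ≠ 0} := by
    apply Complex.continuous_re.comp_continuousOn
    apply ContinuousOn.mul continuousOn_const
    apply hcont.comp
    · exact ContinuousOn.prodMk
        (ContinuousOn.div continuousOn_const
          (Complex.continuous_conj.continuousOn) (fun z hz => hconj_ne z hz))
        continuousOn_id
    · intro z hz
      exact ⟨hane z hz, hz⟩
  have hconn : IsPreconnected {z : ℂ | z ≠ 0} := by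
    have : {z : ℂ | z ≠ 0} = ({0} : Set ℂ)ᶜ := by ext z; simp
    rw [this]
    have := isConnected_compl_singleton_of_one_lt_rank
      (E := ℂ) (Complex.rank_real_complex ▸ Nat.one_lt_ofNat) (0 : ℂ)
    simpa using this.isPreconnected
  have h1mem : (1 : ℂ) ∈ {z : ℂ | z ≠ 0} := one_ne_zero
  have hsign : ∀ z : ℂ, z ≠ 0 → (0 < g 1 → 0 < g z) ∧ (g 1 < 0 → g z < 0) := by
    intro z hz
    constructor
    · intro h1 ; by_contra hle
      have hzlt : g z < 0 := lt_of_le_of_ne (not_lt.mp hle) (hrene z hz)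
      have := hconn.intermediate_value hz h1mem hgcont
      have h0 : (0 : ℝ) ∈ Set.Icc (g z) (g 1) := ⟨le_of_lt hzlt, le_of_lt h1⟩
      obtain ⟨x, hx, hxv⟩ := this h0
      exact hrene x hx hxv
    · intro h1 ; by_contra hle
      have hzlt : 0 < g z := lt_of_le_of_ne (not_lt.mp hle) (Ne.symm (hrene z hz))
      have := hconn.intermediate_value h1mem hz hgcont
      have h0 : (0 : ℝ) ∈ Set.Icc (g 1) (g z) := ⟨le_of_lt h1, le_of_lt hzlt⟩
      obtain ⟨x, hx, hxv⟩ := this h0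
      exact hrene x hx hxv
  by_cases hpos : 0 < g 1
  · refine ⟨θ, 1, Or.inl rfl, hsym 1, ?_⟩
    intro z hz
    have him := hrealdiag z hz
    have hre := (hsign z hz).1 hpos
    constructor
    · rw [show ((1:ℝ):ℂ) = 1 by norm_num, one_mul, ← he]; exact him
    · rw [show ((1:ℝ):ℂ) = 1 by norm_num, one_mul, ← he]; exact hre
  · have hneg : g 1 < 0 := lt_of_le_of_ne (not_lt.mp hpos) (hrene 1 one_ne_zero)
    refine ⟨θ, -1, Or.inr rfl, hsym (-1), ?_⟩
    intro z hz
    have him := hrealdiag z hz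
    have hre := (hsign z hz).2 hneg
    rw [← he]
    have heq : ((-1:ℝ):ℂ) * e * ψ (-1 / conj z, z) = -(e * ψ (-1 / conj z, z)) := by
      push_cast; ring
    rw [heq]
    constructor
    · simp [him]
    · rw [Complex.neg_re]; exact neg_pos.mpr hre
end

section
/- Let E be a complex normed vector space, let k ≥ 1, and let f : E → ℂ be k times continuously differentiable and homogeneous of degree k, i.e. f(λ • x) = λ^k f(x) for all λ ∈ ℂ and x ∈ E. Then for every x ∈ E, the k-th iterated Fréchet derivative of f at x evaluated on (x, x, …, x) equals k! · f(x). -/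
lemma aux_iteratedDeriv_const_mul {n : ℕ} {f : ℂ → ℂ} (h : ContDiff ℂ n f) (c : ℂ) (x : ℂ) :
    iteratedDeriv n (fun z => c * f z) x = c * iteratedDeriv n f x := by
  simp only [← iteratedDerivWithin_univ]
  exact iteratedDerivWithin_const_mul (Set.mem_univ x) uniqueDiffOn_univ c h.contDiffAt.contDiffWithinAt

lemma aux_iteratedDeriv_pow (m : ℕ) (t : ℂ) :
    iteratedDeriv m (fun s : ℂ => s ^ m) t = (m.factorial : ℂ) := by
  induction m generalizing t with
  | zero => simp
  | succ m ih =>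
    rw [iteratedDeriv_succ']
    have hderiv : deriv (fun s : ℂ => s ^ (m + 1)) = fun s => ((m : ℂ) + 1) * s ^ m := by
      funext s
      rw [deriv_pow_field]
      push_cast
      ring
    rw [hderiv, aux_iteratedDeriv_const_mul (f := fun s : ℂ => s ^ m) (contDiff_id.pow m) ((m : ℂ) + 1) t, ih]
    push_cast [Nat.factorial_succ]
    ring

/-- Iterated Euler identity: if `f` is `C^k` over `ℂ` and homogeneous of degree `k`,
then the `k`-th iterated derivative at `x`, evaluated on `(x, …, x)`, is `k! f(x)`. -/
theorem stmt_11 (E : Type*) [NormedAddCommGroup E] [NormedSpace ℂ E]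
    (k : ℕ) (hk : 1 ≤ k) (f : E → ℂ) (hf : ContDiff ℂ k f)
    (hhom : ∀ (lam : ℂ) (x : E), f (lam • x) = lam ^ k * f x) :
    ∀ x : E, iteratedFDeriv ℂ k f x (fun _ => x) = (k.factorial : ℂ) * f x := by
  intro x
  set L : ℂ →L[ℂ] E := ContinuousLinearMap.smulRight (ContinuousLinearMap.id ℂ ℂ) x with hL
  have hLapp : ∀ t : ℂ, L t = t • x := fun t => rfl
  have hcomp : (f ∘ L) = fun t : ℂ => f x * t ^ k := by
    funext t
    simp [hLapp, hhom, mul_comm]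
  have h1 : iteratedFDeriv ℂ k (f ∘ L) 1 = (iteratedFDeriv ℂ k f (L 1)).compContinuousLinearMap
      fun _ => L :=
    L.iteratedFDeriv_comp_right hf 1 le_rfl
  have h2 : iteratedDeriv k (f ∘ L) 1 = iteratedFDeriv ℂ k f x (fun _ => x) := by
    rw [iteratedDeriv, h1]
    simp [hLapp]
  have h3 : iteratedDeriv k (f ∘ L) 1 = (k.factorial : ℂ) * f x := by
    rw [hcomp, aux_iteratedDeriv_const_mul (f := fun s : ℂ => s ^ k) (contDiff_id.pow k) (f x) 1, aux_iteratedDeriv_pow]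
    ring
  rw [← h2, h3]
end

section
/- Let a ∈ ℝ and let M = { x = (x₀,x₁,x₂,x₃) ∈ ℝ⁴ : x₀ > 0 and x₀² − x₁² − x₂² − x₃² > 0 } be the open cone of future-pointing timelike vectors. Let ψ : M → ℂ be twice continuously differentiable, homogeneous of degree a−2 for positive dilations (ψ(λ • x) = λ^(a−2) ψ(x) for all λ > 0, x ∈ M), and satisfy the wave equation ∂₀₀ψ − ∂₁₁ψ − ∂₂₂ψ − ∂₃₃ψ = 0 on M. Define ρ : M → ℝ by ρ(x) = (x₀² − x₁² − x₂² − x₃²)^(1/2). Then on M, ∂₀₀(ρ^(2−a) ψ) − ∂₁₁(ρ^(2−a) ψ) − ∂₂₂(ρ^(2−a) ψ) − ∂₃₃(ρ^(2−a) ψ) = a(2−a) · ρ^(−a) · ψ. -/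
/-- Partial derivative in the `i`-th coordinate direction of a function on `ℝ⁴`. -/
noncomputable def pderiv4 (i : Fin 4) (f : (Fin 4 → ℝ) → ℂ) (x : Fin 4 → ℝ) : ℂ :=
  fderiv ℝ f x (Pi.single i 1)

namespace Stmt13Aux

open ContinuousLinearMap

/-- The Minkowski quadratic form on `ℝ⁴`. -/
def Qf (y : Fin 4 → ℝ) : ℝ := y 0 ^ 2 - y 1 ^ 2 - y 2 ^ 2 - y 3 ^ 2

/-- Signature signs. -/
def ee (i : Fin 4) : ℝ := if i = 0 then 1 else -1

lemma ee_sq (i : Fin 4) : ee i * ee i = 1 := by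
  fin_cases i <;> simp [ee]

/-- The total derivative of `Qf` at `x`. -/
noncomputable def LQ (x : Fin 4 → ℝ) : (Fin 4 → ℝ) →L[ℝ] ℝ :=
  (2 * x 0) • (proj 0 : (Fin 4 → ℝ) →L[ℝ] ℝ) - (2 * x 1) • (proj 1 : (Fin 4 → ℝ) →L[ℝ] ℝ)
    - (2 * x 2) • (proj 2 : (Fin 4 → ℝ) →L[ℝ] ℝ) - (2 * x 3) • (proj 3 : (Fin 4 → ℝ) →L[ℝ] ℝ)

lemma hasFDerivAt_sq (x : Fin 4 → ℝ) (i : Fin 4) :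
    HasFDerivAt (fun y : Fin 4 → ℝ => y i ^ 2) ((2 * x i) • (proj i : (Fin 4 → ℝ) →L[ℝ] ℝ)) x := by
  have h : HasFDerivAt (fun y : Fin 4 → ℝ => y i) (proj i : (Fin 4 → ℝ) →L[ℝ] ℝ) x :=
    (proj i : (Fin 4 → ℝ) →L[ℝ] ℝ).hasFDerivAt
  have h2 := h.mul h
  have e : (2 * x i) • (proj i : (Fin 4 → ℝ) →L[ℝ] ℝ) = x i • proj i + x i • proj i := by
    rw [two_mul, add_smul]
  rw [e]
  exact h2.congr_of_eventuallyEq (Filter.Eventually.of_forall fun y => by simp [sq])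

lemma hasFDerivAt_Qf (x : Fin 4 → ℝ) : HasFDerivAt Qf (LQ x) x := by
  have h0 := hasFDerivAt_sq x 0
  have h1 := hasFDerivAt_sq x 1
  have h2 := hasFDerivAt_sq x 2
  have h3 := hasFDerivAt_sq x 3
  exact ((h0.sub h1).sub h2).sub h3

lemma LQ_single (x : Fin 4 → ℝ) (i : Fin 4) : LQ x (Pi.single i 1) = 2 * ee i * x i := by
  fin_cases i <;> simp [LQ, ee, Pi.single_apply]

lemma continuous_Qf : Continuous Qf := by
  unfold Qf; fun_prop

lemma sum_single (x : Fin 4 → ℝ) : x = ∑ i : Fin 4, x i • (Pi.single i 1 : Fin 4 → ℝ) := by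
  have h := Finset.univ_sum_single x
  rw [← h]; congr 1; ext i j
  simp [Pi.single_apply]

end Stmt13Aux

open Stmt13Aux

/-- The Penrose transform computation: if `ψ` is homogeneous of degree `a − 2` on the
future timelike cone `M` and solves the wave equation there, then
`□(ρ^(2−a) ψ) = a(2−a) ρ^(−a) ψ` on `M`, where `ρ` is the Minkowski norm. -/
theorem stmt_13 (a : ℝ)
    (M : Set (Fin 4 → ℝ))
    (hM : M = {x : Fin 4 → ℝ |
      0 < x 0 ∧ 0 < x 0 ^ 2 - x 1 ^ 2 - x 2 ^ 2 - x 3 ^ 2})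
    (ψ : (Fin 4 → ℝ) → ℂ)
    (hψ : ContDiffOn ℝ 2 ψ M)
    (hhom : ∀ lam : ℝ, 0 < lam → ∀ x ∈ M,
      ψ (lam • x) = ((lam ^ (a - 2) : ℝ) : ℂ) * ψ x)
    (hwave : ∀ x ∈ M,
      pderiv4 0 (pderiv4 0 ψ) x - pderiv4 1 (pderiv4 1 ψ) x -
        pderiv4 2 (pderiv4 2 ψ) x - pderiv4 3 (pderiv4 3 ψ) x = 0) :
    ∀ x ∈ M,
      pderiv4 0 (pderiv4 0 (fun y =>
          ((Real.sqrt (y 0 ^ 2 - y 1 ^ 2 - y 2 ^ 2 - y 3 ^ 2) ^ (2 - a) : ℝ) : ℂ) * ψ y)) x -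
      pderiv4 1 (pderiv4 1 (fun y =>
          ((Real.sqrt (y 0 ^ 2 - y 1 ^ 2 - y 2 ^ 2 - y 3 ^ 2) ^ (2 - a) : ℝ) : ℂ) * ψ y)) x -
      pderiv4 2 (pderiv4 2 (fun y =>
          ((Real.sqrt (y 0 ^ 2 - y 1 ^ 2 - y 2 ^ 2 - y 3 ^ 2) ^ (2 - a) : ℝ) : ℂ) * ψ y)) x -
      pderiv4 3 (pderiv4 3 (fun y =>
          ((Real.sqrt (y 0 ^ 2 - y 1 ^ 2 - y 2 ^ 2 - y 3 ^ 2) ^ (2 - a) : ℝ) : ℂ) * ψ y)) x =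
      ((a * (2 - a) : ℝ) : ℂ) *
        ((Real.sqrt (x 0 ^ 2 - x 1 ^ 2 - x 2 ^ 2 - x 3 ^ 2) ^ (-a) : ℝ) : ℂ) * ψ x := by
  -- Openness of M
  have hMopen : IsOpen M := by
    rw [hM, Set.setOf_and]
    exact (isOpen_lt continuous_const (continuous_apply 0)).inter
      (isOpen_lt continuous_const (by fun_prop))
  have hQpos : ∀ y ∈ M, 0 < Qf y := by
    intro y hy; rw [hM] at hy; exact hy.2
  -- basic differentiability facts
  have hψC : ∀ y ∈ M, ContDiffAt ℝ 2 ψ y := fun y hy => hψ.contDiffAt (hMopen.mem_nhds hy)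
  have hψd : ∀ y ∈ M, DifferentiableAt ℝ ψ y := fun y hy =>
    (hψC y hy).differentiableAt (by norm_num)
  have hψd1 : ∀ y ∈ M, ∀ i, DifferentiableAt ℝ (pderiv4 i ψ) y := by
    intro y hy i
    have h1 : ContDiffAt ℝ 1 (fderiv ℝ ψ) y := (hψC y hy).fderiv_right (m := 1) (by norm_num)
    have h2 : DifferentiableAt ℝ (fderiv ℝ ψ) y := h1.differentiableAt (by norm_num)
    exact ((ContinuousLinearMap.apply ℝ ℂ
      (Pi.single i 1 : Fin 4 → ℝ)).differentiableAt).comp y h2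
  -- cone property
  have hcone : ∀ lam : ℝ, 0 < lam → ∀ y ∈ M, lam • y ∈ M := by
    intro lam hl y hy
    rw [hM] at hy ⊢
    obtain ⟨h1, h2⟩ := hy
    refine ⟨by simpa using mul_pos hl h1, ?_⟩
    have h3 : (lam • y) 0 ^ 2 - (lam • y) 1 ^ 2 - (lam • y) 2 ^ 2 - (lam • y) 3 ^ 2
        = lam ^ 2 * (y 0 ^ 2 - y 1 ^ 2 - y 2 ^ 2 - y 3 ^ 2) := by
      simp [Pi.smul_apply]; ring
    rw [h3]
    exact mul_pos (by positivity) h2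
  -- Euler identity from homogeneity
  have heuler : ∀ y ∈ M, fderiv ℝ ψ y y = ((a - 2 : ℝ) : ℂ) * ψ y := by
    intro y hy
    have hline : HasDerivAt (fun l : ℝ => l • y) y 1 := by
      simpa using (hasDerivAt_id (1 : ℝ)).smul_const y
    have h1 : HasDerivAt (fun l : ℝ => ψ (l • y)) (fderiv ℝ ψ y y) 1 := by
      have hf : HasFDerivAt ψ (fderiv ℝ ψ y) ((1 : ℝ) • y) := by
        simpa using (hψd y hy).hasFDerivAt
      exact hf.comp_hasDerivAt 1 hline
    have h2 : (fun l : ℝ => ψ (l • y)) =ᶠ[nhds 1] fun l => ((l ^ (a - 2) : ℝ) : ℂ) * ψ y := by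
      filter_upwards [eventually_gt_nhds (by norm_num : (0 : ℝ) < 1)] with l hl
      exact hhom l hl y hy
    have h3 : HasDerivAt (fun l : ℝ => ((l ^ (a - 2) : ℝ) : ℂ) * ψ y)
        (((a - 2 : ℝ) : ℂ) * ψ y) 1 := by
      have hr : HasDerivAt (fun l : ℝ => l ^ (a - 2)) (a - 2) 1 := by
        simpa using Real.hasDerivAt_rpow_const (x := 1) (p := a - 2) (Or.inl one_ne_zero)
      simpa using hr.ofReal_comp.mul_const (ψ y)
    exact h1.unique (h3.congr_of_eventuallyEq h2)
  have heulerC : ∀ y ∈ M,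
      (y 0 : ℂ) * pderiv4 0 ψ y + (y 1 : ℂ) * pderiv4 1 ψ y + (y 2 : ℂ) * pderiv4 2 ψ y
        + (y 3 : ℂ) * pderiv4 3 ψ y = ((a - 2 : ℝ) : ℂ) * ψ y := by
    intro y hy
    have h := heuler y hy
    have hsum : fderiv ℝ ψ y y = ∑ i : Fin 4, (y i : ℂ) * pderiv4 i ψ y := by
      calc fderiv ℝ ψ y y
          = fderiv ℝ ψ y (∑ i : Fin 4, y i • (Pi.single i 1 : Fin 4 → ℝ)) := by
            rw [← sum_single y]
        _ = ∑ i : Fin 4, (y i : ℂ) * pderiv4 i ψ y := by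
            rw [map_sum]
            refine Finset.sum_congr rfl fun i _ => ?_
            rw [map_smul]
            simp [pderiv4, Complex.real_smul]
    rw [hsum, Fin.sum_univ_four] at h
    exact h
  -- derivative of powers of Qf
  have hgd : ∀ p : ℝ, ∀ y ∈ M, HasFDerivAt (fun z => ((Qf z ^ p : ℝ) : ℂ))
      (Complex.ofRealCLM.comp ((p * Qf y ^ (p - 1)) • LQ y)) y := by
    intro p y hy
    exact Complex.ofRealCLM.hasFDerivAt.comp y
      ((hasFDerivAt_Qf y).rpow_const (Or.inl (hQpos y hy).ne'))
  intro x hx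
  have hQx : 0 < Qf x := hQpos x hx
  have hQne : Qf x ≠ 0 := hQx.ne'
  -- first-derivative formula near x
  have hfirst : ∀ i : Fin 4, (pderiv4 i (fun y =>
      ((Real.sqrt (y 0 ^ 2 - y 1 ^ 2 - y 2 ^ 2 - y 3 ^ 2) ^ (2 - a) : ℝ) : ℂ) * ψ y))
      =ᶠ[nhds x] fun y =>
        ((((2 - a) * ee i) * (y i * Qf y ^ ((2 - a) / 2 - 1)) : ℝ) : ℂ) * ψ y
          + ((Qf y ^ ((2 - a) / 2) : ℝ) : ℂ) * pderiv4 i ψ y := by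
    intro i
    filter_upwards [hMopen.mem_nhds hx] with y hy
    have hFFc : (fun z : Fin 4 → ℝ =>
        ((Real.sqrt (z 0 ^ 2 - z 1 ^ 2 - z 2 ^ 2 - z 3 ^ 2) ^ (2 - a) : ℝ) : ℂ) * ψ z)
        =ᶠ[nhds y] fun z => ((Qf z ^ ((2 - a) / 2) : ℝ) : ℂ) * ψ z := by
      filter_upwards [hMopen.mem_nhds hy] with z hz
      have hz2 : (z 0 ^ 2 - z 1 ^ 2 - z 2 ^ 2 - z 3 ^ 2) = Qf z := rfl
      have h1 : Real.sqrt (z 0 ^ 2 - z 1 ^ 2 - z 2 ^ 2 - z 3 ^ 2) ^ (2 - a)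
          = Qf z ^ ((2 - a) / 2) := by
        rw [hz2, Real.sqrt_eq_rpow, ← Real.rpow_mul (hQpos z hz).le]
        congr 1
        ring
      rw [h1]
    have hFc : HasFDerivAt (fun z => ((Qf z ^ ((2 - a) / 2) : ℝ) : ℂ) * ψ z)
        (((Qf y ^ ((2 - a) / 2) : ℝ) : ℂ) • fderiv ℝ ψ y
          + ψ y • (Complex.ofRealCLM.comp
            ((((2 - a) / 2) * Qf y ^ ((2 - a) / 2 - 1)) • LQ y))) y :=
      (hgd ((2 - a) / 2) y hy).mul (hψd y hy).hasFDerivAt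
    have e1 : pderiv4 i (fun z : Fin 4 → ℝ =>
        ((Real.sqrt (z 0 ^ 2 - z 1 ^ 2 - z 2 ^ 2 - z 3 ^ 2) ^ (2 - a) : ℝ) : ℂ) * ψ z) y
        = pderiv4 i (fun z => ((Qf z ^ ((2 - a) / 2) : ℝ) : ℂ) * ψ z) y := by
      rw [pderiv4, pderiv4, hFFc.fderiv_eq]
    rw [e1, pderiv4, hFc.fderiv]
    simp only [ContinuousLinearMap.add_apply, ContinuousLinearMap.smul_apply,
      ContinuousLinearMap.coe_comp', Function.comp_apply, Complex.ofRealCLM_apply,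
      LQ_single, Complex.real_smul, smul_eq_mul, pderiv4]
    push_cast
    ring
  -- second-derivative formula at x
  have key : ∀ i : Fin 4, pderiv4 i (pderiv4 i (fun y =>
      ((Real.sqrt (y 0 ^ 2 - y 1 ^ 2 - y 2 ^ 2 - y 3 ^ 2) ^ (2 - a) : ℝ) : ℂ) * ψ y)) x
      = ((2 - (a : ℂ)) * (ee i : ℂ) * ((Qf x ^ ((2 - a) / 2 - 1) : ℝ) : ℂ)
            + (2 - (a : ℂ)) * ((2 - (a : ℂ)) / 2 - 1) * 2 * ((ee i : ℂ) * (ee i : ℂ))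
              * (x i : ℂ) ^ 2 * ((Qf x ^ ((2 - a) / 2 - 1 - 1) : ℝ) : ℂ)) * ψ x
        + 2 * (2 - (a : ℂ)) * (ee i : ℂ) * (x i : ℂ) * ((Qf x ^ ((2 - a) / 2 - 1) : ℝ) : ℂ)
            * pderiv4 i ψ x
        + ((Qf x ^ ((2 - a) / 2) : ℝ) : ℂ) * pderiv4 i (pderiv4 i ψ) x := by
    intro i
    have hproj : HasFDerivAt (fun y : Fin 4 → ℝ => y i)
        (ContinuousLinearMap.proj i : (Fin 4 → ℝ) →L[ℝ] ℝ) x :=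
      (ContinuousLinearMap.proj i : (Fin 4 → ℝ) →L[ℝ] ℝ).hasFDerivAt
    have hr1 := hproj.mul ((hasFDerivAt_Qf x).rpow_const
      (Or.inl hQne) (p := (2 - a) / 2 - 1))
    have hr1' := hr1.const_mul ((2 - a) * ee i)
    have hc1 := Complex.ofRealCLM.hasFDerivAt.comp x hr1'
    have ht1 := hc1.mul (hψd x hx).hasFDerivAt
    have ht2 := (hgd ((2 - a) / 2) x hx).mul ((hψd1 x hx i).hasFDerivAt)
    have hH := ht1.add ht2
    have hH' : HasFDerivAt (fun y =>
        ((((2 - a) * ee i) * (y i * Qf y ^ ((2 - a) / 2 - 1)) : ℝ) : ℂ) * ψ y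
          + ((Qf y ^ ((2 - a) / 2) : ℝ) : ℂ) * pderiv4 i ψ y) _ x := hH
    have hPF := hH'.congr_of_eventuallyEq (hfirst i)
    have : pderiv4 i (pderiv4 i (fun y =>
        ((Real.sqrt (y 0 ^ 2 - y 1 ^ 2 - y 2 ^ 2 - y 3 ^ 2) ^ (2 - a) : ℝ) : ℂ) * ψ y)) x
        = fderiv ℝ (pderiv4 i (fun y =>
        ((Real.sqrt (y 0 ^ 2 - y 1 ^ 2 - y 2 ^ 2 - y 3 ^ 2) ^ (2 - a) : ℝ) : ℂ) * ψ y)) x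
          (Pi.single i 1) := rfl
    rw [this, hPF.fderiv]
    simp only [ContinuousLinearMap.add_apply, ContinuousLinearMap.smul_apply,
      ContinuousLinearMap.coe_comp', Function.comp_apply, Complex.ofRealCLM_apply,
      ContinuousLinearMap.coe_sub', Pi.sub_apply, LQ_single,
      ContinuousLinearMap.proj_apply, Pi.single_eq_same, Complex.real_smul,
      smul_eq_mul, pderiv4, Pi.mul_apply]
    push_cast
    ring
  have k0 := key 0
  have k1 := key 1
  have k2 := key 2
  have k3 := key 3
  have hee0 : ee 0 = 1 := rfl
  have hee1 : ee 1 = -1 := rfl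
  have hee2 : ee 2 = -1 := rfl
  have hee3 : ee 3 = -1 := rfl
  rw [hee0] at k0
  rw [hee1] at k1
  rw [hee2] at k2
  rw [hee3] at k3
  rw [k0, k1, k2, k3]
  have hsqrt : Real.sqrt (x 0 ^ 2 - x 1 ^ 2 - x 2 ^ 2 - x 3 ^ 2) ^ (-a)
      = Qf x ^ ((2 - a) / 2 - 1) := by
    have hz : (x 0 ^ 2 - x 1 ^ 2 - x 2 ^ 2 - x 3 ^ 2) = Qf x := rfl
    rw [hz, Real.sqrt_eq_rpow, ← Real.rpow_mul hQx.le]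
    congr 1
    ring
  rw [hsqrt]
  have hr' : Qf x ^ ((2 - a) / 2 - 1 - 1) * Qf x = Qf x ^ ((2 - a) / 2 - 1) := by
    rw [← Real.rpow_add_one hQne]
    congr 1
    ring
  have hQC : ((Qf x : ℝ) : ℂ) = (x 0 : ℂ) ^ 2 - (x 1 : ℂ) ^ 2 - (x 2 : ℂ) ^ 2 - (x 3 : ℂ) ^ 2 := by
    unfold Qf
    push_cast
    ring
  have hB : ((Qf x ^ ((2 - a) / 2 - 1 - 1) : ℝ) : ℂ)
      * ((x 0 : ℂ) ^ 2 - (x 1 : ℂ) ^ 2 - (x 2 : ℂ) ^ 2 - (x 3 : ℂ) ^ 2)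
      = ((Qf x ^ ((2 - a) / 2 - 1) : ℝ) : ℂ) := by
    rw [← hQC, ← Complex.ofReal_mul, hr']
  have hE := heulerC x hx
  have hW := hwave x hx
  push_cast at hE ⊢
  linear_combination (((Qf x ^ ((2 - a) / 2) : ℝ) : ℂ)) * hW
    + (2 * (2 - (a : ℂ)) * ((Qf x ^ ((2 - a) / 2 - 1) : ℝ) : ℂ)) * hE
    + ((2 - (a : ℂ)) * ((2 - (a : ℂ)) / 2 - 1) * 2 * ψ x) * hB
end

section
/- For any two vectors x, y ∈ ℂ² with ‖x‖ = ‖y‖ (standard Hermitian norm), there exists a unitary 2×2 matrix u ∈ U(2) such that (uᵀ u) · x = y, where uᵀ is the transpose (not conjugate transpose) of u and · is matrix-vector multiplication. In particular, the set { uᵀu : u ∈ U(2) } of symmetric unitary matrices acts transitively on each sphere in ℂ². -/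
open Matrix Complex
open scoped Matrix ComplexConjugate

set_option maxHeartbeats 1000000

lemma mulVec_fin_two' (a b c d v w : ℂ) :
    !![a, b; c, d] *ᵥ ![v, w] = ![a*v + b*w, c*v + d*w] := by
  funext i
  fin_cases i <;>
    simp [Matrix.mulVec, dotProduct, Fin.sum_univ_two]

lemma vtwo_eq {v w v' w' : ℂ} (h1 : v = v') (h2 : w = w') : ![v, w] = ![v', w'] := by
  rw [h1, h2]

lemma starvec2 (v w : ℂ) : star ![v, w] = ![conj v, conj w] := by
  funext i; fin_cases i <;> simp

lemma unit_of (a b c d : ℂ)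
    (h11 : conj a * a + conj c * c = 1)
    (h12 : conj a * b + conj c * d = 0)
    (h22 : conj b * b + conj d * d = 1) :
    !![a, b; c, d] ∈ Matrix.unitaryGroup (Fin 2) ℂ := by
  rw [Matrix.mem_unitaryGroup_iff']
  have h21 : conj b * a + conj d * c = 0 := by
    have := congrArg conj h12
    simpa [mul_comm] using this
  ext i j
  fin_cases i <;> fin_cases j <;>
    simp [Matrix.mul_apply, Fin.sum_univ_two, Matrix.conjTranspose_apply] <;>
    first
      | linear_combination h11
      | linear_combination h12
      | linear_combination h21
      | linear_combination h22

lemma exp_real_mul_I_conj (t : ℝ) : Complex.exp (t*I) * conj (Complex.exp (t*I)) = 1 := by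
  rw [← Complex.exp_conj, ← Complex.exp_add]
  simp

lemma mul_exp_neg_arg (z : ℂ) : z * Complex.exp ((-z.arg : ℝ) * I) = (‖z‖ : ℂ) := by
  conv_lhs => lhs; rw [← Complex.norm_mul_exp_arg_mul_I z]
  rw [mul_assoc, ← Complex.exp_add]
  rw [show (z.arg : ℂ) * I + (-z.arg : ℝ) * I = 0 by push_cast; ring, Complex.exp_zero, mul_one]

lemma trans_trick (u : Matrix (Fin 2) (Fin 2) ℂ) (hu : u ∈ Matrix.unitaryGroup (Fin 2) ℂ)
    (v w : Fin 2 → ℂ) (h : u *ᵥ v = star (u *ᵥ star w)) :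
    (uᵀ * u) *ᵥ v = w := by
  rw [← Matrix.mulVec_mulVec, h]
  have key : ∀ z : Fin 2 → ℂ, uᵀ *ᵥ star z = star (uᴴ *ᵥ z) := by
    intro z
    funext i
    fin_cases i <;>
    simp [Matrix.mulVec, dotProduct, Fin.sum_univ_two, Matrix.conjTranspose_apply,
      mul_comm]
  rw [key, Matrix.mulVec_mulVec]
  have h1 : uᴴ * u = 1 := by
    rw [← Matrix.star_eq_conjTranspose]
    exact Matrix.mem_unitaryGroup_iff'.mp hu
  rw [h1, Matrix.one_mulVec, star_star]

lemma key2 (x₁ x₂ y₁ y₂ : ℂ)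
    (h : normSq x₁ + normSq x₂ = normSq y₁ + normSq y₂) :
    ∃ u ∈ Matrix.unitaryGroup (Fin 2) ℂ,
      (uᵀ * u) *ᵥ ![x₁, x₂] = ![y₁, y₂] := by
  rcases eq_or_ne (normSq x₁ + normSq x₂) 0 with h0 | h0
  · have hn1 := Complex.normSq_nonneg x₁
    have hn2 := Complex.normSq_nonneg x₂
    have hn3 := Complex.normSq_nonneg y₁
    have hn4 := Complex.normSq_nonneg y₂
    have h0' := h ▸ h0
    have hx1 : x₁ = 0 := Complex.normSq_eq_zero.mp (by linarith)
    have hx2 : x₂ = 0 := Complex.normSq_eq_zero.mp (by linarith)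
    have hy1 : y₁ = 0 := Complex.normSq_eq_zero.mp (by rw [h] at h0; linarith)
    have hy2 : y₂ = 0 := Complex.normSq_eq_zero.mp (by rw [h] at h0; linarith)
    refine ⟨1, one_mem _, ?_⟩
    subst hx1 hx2 hy1 hy2
    have hz : ![(0:ℂ), 0] = 0 := by funext i; fin_cases i <;> simp
    rw [hz, Matrix.mulVec_zero]
  · have hS0 : 0 < normSq x₁ + normSq x₂ :=
      lt_of_le_of_ne (add_nonneg (Complex.normSq_nonneg _) (Complex.normSq_nonneg _)) (Ne.symm h0)
    set S := normSq x₁ + normSq x₂ with hSdef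
    set r := Real.sqrt S with hrdef
    have hr0 : 0 < r := Real.sqrt_pos.mpr hS0
    have hr2 : r ^ 2 = S := Real.sq_sqrt hS0.le
    have hrC : ((r : ℝ) : ℂ) ^ 2 = (S : ℂ) := by exact_mod_cast hr2
    have hrC0 : (r : ℂ) ≠ 0 := by exact_mod_cast hr0.ne'
    obtain ⟨A, hAdef⟩ : ∃ A : ℂ, A = conj x₁ * conj y₁ + conj x₂ * conj y₂ := ⟨_, rfl⟩
    obtain ⟨B, hBdef⟩ : ∃ B : ℂ, B = x₁ * conj y₂ - x₂ * conj y₁ := ⟨_, rfl⟩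
    obtain ⟨a, hadef⟩ : ∃ a : ℂ, a = A / (r : ℂ) := ⟨_, rfl⟩
    obtain ⟨b₀, hb₀def⟩ : ∃ b₀ : ℂ, b₀ = B / (r : ℂ) := ⟨_, rfl⟩
    obtain ⟨m, hmdef⟩ : ∃ m : ℝ, m = ‖a‖ := ⟨_, rfl⟩
    obtain ⟨b, hbdef⟩ : ∃ b : ℝ, b = ‖b₀‖ := ⟨_, rfl⟩
    have hSxC : conj x₁ * x₁ + conj x₂ * x₂ = (S : ℂ) := by
      rw [hSdef]
      push_cast
      rw [← Complex.normSq_eq_conj_mul_self, ← Complex.normSq_eq_conj_mul_self]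
    have hSyC : conj y₁ * y₁ + conj y₂ * y₂ = (S : ℂ) := by
      rw [show S = normSq y₁ + normSq y₂ from h]
      push_cast
      rw [← Complex.normSq_eq_conj_mul_self, ← Complex.normSq_eq_conj_mul_self]
    have hCLag : conj A * A + conj B * B = (S : ℂ) * (S : ℂ) := by
      have expand : conj A * A + conj B * B
          = (conj x₁ * x₁ + conj x₂ * x₂) * (conj y₁ * y₁ + conj y₂ * y₂) := by
        simp only [hAdef, hBdef, map_add, _root_.map_mul, map_sub, Complex.conj_conj]
        ring
      rw [expand, hSxC, hSyC]
    have hLagR : m ^ 2 + b ^ 2 = r ^ 2 := by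
      have h1 : (normSq A : ℝ) + normSq B = S * S := by
        have := hCLag
        rw [← Complex.normSq_eq_conj_mul_self, ← Complex.normSq_eq_conj_mul_self] at this
        exact_mod_cast this
      have hrr : r * r = S := by nlinarith
      have h2 : m ^ 2 = normSq A / S := by
        rw [hmdef, Complex.sq_norm, hadef, Complex.normSq_div, Complex.normSq_ofReal, hrr]
      have h3 : b ^ 2 = normSq B / S := by
        rw [hbdef, Complex.sq_norm, hb₀def, Complex.normSq_div, Complex.normSq_ofReal, hrr]
      rw [h2, h3, hr2]
      field_simp
      linarith [h1]
    have hm0 : 0 ≤ m := hmdef ▸ norm_nonneg _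
    have hb0 : 0 ≤ b := hbdef ▸ norm_nonneg _
    have hmr : m ≤ r := by nlinarith [sq_nonneg b]
    have hrm : 0 < r + m := by linarith
    have hrmC : (r : ℂ) + (m : ℂ) ≠ 0 := by
      have : ((r + m : ℝ) : ℂ) ≠ 0 := by exact_mod_cast hrm.ne'
      push_cast at this
      exact this
    set α := Real.sqrt ((r + m) / (2 * r)) with hαdef
    set β' := Real.sqrt ((r - m) / (2 * r)) with hβ'def
    have hα2 : α ^ 2 = (r + m) / (2 * r) := Real.sq_sqrt (by positivity)
    have hβ'2 : β' ^ 2 = (r - m) / (2 * r) :=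
      Real.sq_sqrt (div_nonneg (by linarith) (by linarith))
    have hα0 : 0 ≤ α := Real.sqrt_nonneg _
    have hβ'0 : 0 ≤ β' := Real.sqrt_nonneg _
    have h3R : b * α = (r + m) * β' := by
      have hsq : (b * α) ^ 2 = ((r + m) * β') ^ 2 := by
        rw [mul_pow, mul_pow, hα2, hβ'2]
        field_simp
        nlinarith [hLagR]
      calc b * α = Real.sqrt ((b * α) ^ 2) := (Real.sqrt_sq (by positivity)).symm
        _ = Real.sqrt (((r + m) * β') ^ 2) := by rw [hsq]
        _ = (r + m) * β' := Real.sqrt_sq (by positivity)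
    have h3C : (b : ℂ) * (α : ℂ) = ((r : ℂ) + m) * (β' : ℂ) := by exact_mod_cast h3R
    have hαβR : α ^ 2 + β' ^ 2 = 1 := by
      rw [hα2, hβ'2]; field_simp; ring
    have hαβC : (α : ℂ) ^ 2 + (β' : ℂ) ^ 2 = 1 := by exact_mod_cast hαβR
    have h22R : α ^ 2 * b ^ 2 + α ^ 2 * (r + m) ^ 2 = (r + m) ^ 2 := by
      rw [hα2]
      have hb2 : b ^ 2 = r ^ 2 - m ^ 2 := by linarith
      rw [hb2]
      field_simp
      ring
    have h22C : (α : ℂ) ^ 2 * (b : ℂ) ^ 2 + (α : ℂ) ^ 2 * ((r : ℂ) + m) ^ 2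
        = ((r : ℂ) + m) ^ 2 := by exact_mod_cast h22R
    have hb2C : (b : ℂ) ^ 2 = (r : ℂ) ^ 2 - (m : ℂ) ^ 2 := by
      have : b ^ 2 = r ^ 2 - m ^ 2 := by linarith
      exact_mod_cast this
    set ε := Complex.exp ((-(a.arg) / 2 : ℝ) * I) with hεdef
    have hεu : ε * conj ε = 1 := exp_real_mul_I_conj _
    have hε2 : ε ^ 2 = Complex.exp ((-a.arg : ℝ) * I) := by
      rw [sq, ← Complex.exp_add]
      congr 1
      push_cast
      ring
    have hAε : a * ε ^ 2 = (m : ℂ) := by rw [hε2, hmdef]; exact mul_exp_neg_arg a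
    have haε : a * ε = (m : ℂ) * conj ε := by
      linear_combination conj ε * hAε - a * ε * hεu
    have hcaε : conj a * conj ε = (m : ℂ) * ε := by
      have := congrArg conj haε
      simpa using this
    set βc := Complex.exp ((-(b₀.arg) : ℝ) * I) with hβcdef
    have hβu : βc * conj βc = 1 := exp_real_mul_I_conj _
    have hβb : b₀ * βc = (b : ℂ) := by rw [hbdef]; exact mul_exp_neg_arg b₀
    -- the three unitary factors
    have hu₁ : !![conj x₁/(r:ℂ), conj x₂/(r:ℂ); -x₂/(r:ℂ), x₁/(r:ℂ)]
        ∈ Matrix.unitaryGroup (Fin 2) ℂ := by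
      apply unit_of <;>
        simp only [map_div₀, map_neg, Complex.conj_conj, Complex.conj_ofReal]
      · field_simp
        linear_combination hSxC - hrC
      · field_simp
        ring
      · field_simp
        linear_combination hSxC - hrC
    have hd : !![(1:ℂ), 0; 0, βc] ∈ Matrix.unitaryGroup (Fin 2) ℂ := by
      apply unit_of
      · simp
      · simp
      · simp only [_root_.map_one, map_zero, mul_zero, zero_mul, add_zero, zero_add, mul_one]
        linear_combination hβu
    have hp : !![ε*α, conj ε*α*b/((r:ℂ)+m); I*(ε*β'), -(I*(conj ε*α))]
        ∈ Matrix.unitaryGroup (Fin 2) ℂ := by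
      apply unit_of <;>
        simp only [_root_.map_mul, map_div₀, map_neg, map_add, Complex.conj_conj,
          Complex.conj_ofReal, Complex.conj_I]
      · ring_nf
        try simp only [Complex.I_sq]
        linear_combination ((α:ℂ)^2 + (β':ℂ)^2) * hεu + hαβC
      · field_simp
        ring_nf
        try simp only [Complex.I_sq]
        linear_combination (conj ε)^2 * (α:ℂ) * h3C
      · field_simp
        ring_nf
        try simp only [Complex.I_sq]
        linear_combination ((α:ℂ)^2*(b:ℂ)^2 + (α:ℂ)^2*((r:ℂ)+m)^2) * hεu + h22C
    refine ⟨!![ε*α, conj ε*α*b/((r:ℂ)+m); I*(ε*β'), -(I*(conj ε*α))] *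
        (!![(1:ℂ), 0; 0, βc] * !![conj x₁/(r:ℂ), conj x₂/(r:ℂ); -x₂/(r:ℂ), x₁/(r:ℂ)]),
      mul_mem hp (mul_mem hd hu₁), ?_⟩
    apply trans_trick _ (mul_mem hp (mul_mem hd hu₁))
    rw [starvec2, ← Matrix.mulVec_mulVec, ← Matrix.mulVec_mulVec,
      ← Matrix.mulVec_mulVec, ← Matrix.mulVec_mulVec]
    have e1 : !![conj x₁/(r:ℂ), conj x₂/(r:ℂ); -x₂/(r:ℂ), x₁/(r:ℂ)] *ᵥ ![x₁, x₂]
        = ![(r:ℂ), 0] := by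
      rw [mulVec_fin_two']
      apply vtwo_eq
      · field_simp
        linear_combination hSxC - hrC
      · field_simp
        ring
    have e3 : !![conj x₁/(r:ℂ), conj x₂/(r:ℂ); -x₂/(r:ℂ), x₁/(r:ℂ)] *ᵥ ![conj y₁, conj y₂]
        = ![a, b₀] := by
      rw [mulVec_fin_two']
      apply vtwo_eq
      · rw [hadef, hAdef]; ring
      · rw [hb₀def, hBdef]; ring
    have e2 : !![(1:ℂ), 0; 0, βc] *ᵥ ![(r:ℂ), 0] = ![(r:ℂ), 0] := by
      rw [mulVec_fin_two']
      apply vtwo_eq <;> ring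
    have e4 : !![(1:ℂ), 0; 0, βc] *ᵥ ![a, b₀] = ![a, (b:ℂ)] := by
      rw [mulVec_fin_two']
      apply vtwo_eq
      · ring
      · linear_combination hβb
    rw [e1, e3, e2, e4, mulVec_fin_two', mulVec_fin_two', starvec2]
    apply vtwo_eq <;>
      simp only [map_add, _root_.map_mul, map_div₀, map_neg,
        Complex.conj_conj, Complex.conj_ofReal, Complex.conj_I]
    · field_simp
      ring_nf
      try simp only [Complex.I_sq]
      linear_combination (-(α:ℂ)*((r:ℂ)+m)) * hcaε - (ε*(α:ℂ)) * hb2C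
    · ring_nf
      try simp only [Complex.I_sq]
      linear_combination (I*(β':ℂ)) * hcaε - I*ε*h3C

/-- The set `{uᵀu : u ∈ U(2)}` of symmetric unitary matrices acts transitively on
each sphere of `ℂ²`: for `‖x‖ = ‖y‖` there is `u ∈ U(2)` with `(uᵀu)·x = y`. -/
theorem stmt_15 (x y : EuclideanSpace ℂ (Fin 2)) (h : ‖x‖ = ‖y‖) :
    ∃ u ∈ Matrix.unitaryGroup (Fin 2) ℂ,
      (uᵀ * u) *ᵥ (EuclideanSpace.equiv (Fin 2) ℂ x) =
        EuclideanSpace.equiv (Fin 2) ℂ y := by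
  have hx : ‖x‖ = Real.sqrt (‖x 0‖^2 + ‖x 1‖^2) := by
    rw [EuclideanSpace.norm_eq, Fin.sum_univ_two]
  have hy : ‖y‖ = Real.sqrt (‖y 0‖^2 + ‖y 1‖^2) := by
    rw [EuclideanSpace.norm_eq, Fin.sum_univ_two]
  have hsum : ‖x 0‖^2 + ‖x 1‖^2 = ‖y 0‖^2 + ‖y 1‖^2 := by
    rw [hx, hy] at h
    exact (Real.sqrt_inj (by positivity) (by positivity)).mp h
  have hns : Complex.normSq (x 0) + Complex.normSq (x 1)
      = Complex.normSq (y 0) + Complex.normSq (y 1) := by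
    simpa [Complex.normSq_eq_norm_sq] using hsum
  obtain ⟨u, hu, hu2⟩ := key2 (x 0) (x 1) (y 0) (y 1) hns
  refine ⟨u, hu, ?_⟩
  have ex : (EuclideanSpace.equiv (Fin 2) ℂ x : Fin 2 → ℂ) = ![x 0, x 1] := by
    funext i; fin_cases i <;> rfl
  have ey : (EuclideanSpace.equiv (Fin 2) ℂ y : Fin 2 → ℂ) = ![y 0, y 1] := by
    funext i; fin_cases i <;> rfl
  rw [ex, ey]
  exact hu2
end

section
/- Let v₀, v₁, v₂ ∈ ℂ³ satisfy ‖v₀‖ = ‖v₂‖ and ⟨v₀, v₁⟩ + ⟨v₁, v₂⟩ = 0, and suppose v₁ ≠ 0. Then there exist a real number λ > 0 and a unitary matrix u ∈ U(3) such that, setting wⱼ = λ · (u · vⱼ) for j = 0, 1, 2: all three coordinates of w₁ are real, and w₂ = −conj(w₀) (coordinatewise complex conjugation). -/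
open scoped Matrix
open scoped ComplexConjugate

/-- Normal form for points of the moduli space `M₂`: a triple `(v₀, v₁, v₂)` in `ℂ³`
with `‖v₀‖ = ‖v₂‖`, `⟨v₀,v₁⟩ + ⟨v₁,v₂⟩ = 0` and `v₁ ≠ 0` can be moved by the conformal
unitary group `CU(3) = ℝ⁺ × U(3)` so that `w₁` is real and `w₂ = −conj(w₀)`. -/
theorem stmt_16 (v₀ v₁ v₂ : EuclideanSpace ℂ (Fin 3))
    (hnorm : ‖v₀‖ = ‖v₂‖)
    (hmom : (inner ℂ v₀ v₁ : ℂ) + inner ℂ v₁ v₂ = 0)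
    (hv₁ : v₁ ≠ 0) :
    ∃ lam : ℝ, 0 < lam ∧ ∃ u ∈ Matrix.unitaryGroup (Fin 3) ℂ,
      (∀ i : Fin 3,
        ((lam • (u *ᵥ EuclideanSpace.equiv (Fin 3) ℂ v₁)) i).im = 0) ∧
      lam • (u *ᵥ EuclideanSpace.equiv (Fin 3) ℂ v₂) =
        -star (lam • (u *ᵥ EuclideanSpace.equiv (Fin 3) ℂ v₀)) := by
  classical
  set A : Fin 3 → EuclideanSpace ℂ (Fin 3) := ![v₁, v₀ - v₂, Complex.I • (v₀ + v₂)] with hA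
  set U : Submodule ℝ (EuclideanSpace ℂ (Fin 3)) := Submodule.span ℝ (Set.range A) with hU
  have h12 : (inner ℂ v₁ v₂ : ℂ) = - inner ℂ v₀ v₁ := by linear_combination hmom
  have h21 : (inner ℂ v₂ v₁ : ℂ) = - conj (inner ℂ v₀ v₁ : ℂ) := by
    rw [← inner_conj_symm v₂ v₁, h12, map_neg]
  have h10 : (inner ℂ v₁ v₀ : ℂ) = conj (inner ℂ v₀ v₁ : ℂ) := (inner_conj_symm v₁ v₀).symm
  have h20 : (inner ℂ v₂ v₀ : ℂ) = conj (inner ℂ v₀ v₂ : ℂ) := (inner_conj_symm v₂ v₀).symm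
  have hnn : (inner ℂ v₂ v₂ : ℂ) = inner ℂ v₀ v₀ := by
    rw [inner_self_eq_norm_sq_to_K, inner_self_eq_norm_sq_to_K, hnorm]
  have him0 : (inner ℂ v₀ v₀ : ℂ).im = 0 := by simpa using inner_self_im (𝕜 := ℂ) v₀
  have him1 : (inner ℂ v₁ v₁ : ℂ).im = 0 := by simpa using inner_self_im (𝕜 := ℂ) v₁
  have hrange : Set.range A = {v₁, v₀ - v₂, Complex.I • (v₀ + v₂)} := by
    rw [hA]; ext z
    constructor
    · rintro ⟨k, rfl⟩; fin_cases k <;> simp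
    · rintro (rfl | rfl | rfl)
      exacts [⟨0, rfl⟩, ⟨1, rfl⟩, ⟨2, rfl⟩]
  have hgram : ∀ x ∈ U, ∀ y ∈ U, (inner ℂ x y : ℂ).im = 0 := by
    intro x hx y hy
    rw [hU, hrange] at hx hy
    induction hx, hy using Submodule.span_induction₂ with
    | mem_mem x y hx hy =>
      simp only [Set.mem_insert_iff, Set.mem_singleton_iff] at hx hy
      rcases hx with rfl | rfl | rfl <;> rcases hy with rfl | rfl | rfl <;>
        (simp only [inner_sub_left, inner_sub_right, inner_add_left, inner_add_right,
          inner_smul_left, inner_smul_right, h12, h21, h10, h20, hnn, Complex.conj_I,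
          Complex.add_im, Complex.sub_im, Complex.neg_im, Complex.neg_re,
          Complex.add_re, Complex.sub_re, Complex.mul_im, Complex.mul_re,
          Complex.conj_re, Complex.conj_im, Complex.I_re, Complex.I_im, him0, him1]
         try ring)
    | zero_left y hy => simp
    | zero_right x hx => simp
    | add_left x y z hx hy hz h1 h2 =>
      rw [inner_add_left, Complex.add_im, h1, h2, add_zero]
    | add_right x y z hx hy hz h1 h2 =>
      rw [inner_add_right, Complex.add_im, h1, h2, add_zero]
    | smul_left r x y hx hy h =>
      rw [RCLike.real_smul_eq_coe_smul (K := ℂ), inner_smul_left]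
      simp [-PiLp.inner_apply, Complex.mul_im, h]
    | smul_right r x y hx hy h =>
      rw [RCLike.real_smul_eq_coe_smul (K := ℂ), inner_smul_right]
      simp [-PiLp.inner_apply, Complex.mul_im, h]
  have hcond : ∀ x ∈ U, (inner ℂ x v₁ : ℂ).im = 0 ∧ (inner ℂ x v₂ : ℂ) + inner ℂ v₀ x = 0 := by
    intro x hx
    rw [hU, hrange] at hx
    induction hx using Submodule.span_induction with
    | mem x h =>
      simp only [Set.mem_insert_iff, Set.mem_singleton_iff] at h
      rcases h with rfl | rfl | rfl <;> refine ⟨?_, ?_⟩ <;>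
        (simp only [inner_sub_left, inner_sub_right, inner_add_left, inner_add_right,
          inner_smul_left, inner_smul_right, h12, h21, h10, h20, hnn, Complex.conj_I,
          Complex.add_im, Complex.sub_im, Complex.neg_im, Complex.neg_re,
          Complex.add_re, Complex.sub_re, Complex.mul_im, Complex.mul_re,
          Complex.conj_re, Complex.conj_im, Complex.I_re, Complex.I_im, him0, him1]
         try ring)
    | zero => simp
    | add x y hx hy h1 h2 =>
      refine ⟨?_, ?_⟩
      · rw [inner_add_left, Complex.add_im, h1.1, h2.1, add_zero]
      · rw [inner_add_left, inner_add_right]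
        linear_combination h1.2 + h2.2
    | smul r x hx h =>
      refine ⟨?_, ?_⟩
      · rw [RCLike.real_smul_eq_coe_smul (K := ℂ), inner_smul_left]
        simp [-PiLp.inner_apply, Complex.mul_im, h.1]
      · rw [RCLike.real_smul_eq_coe_smul (K := ℂ), inner_smul_left, inner_smul_right]
        simp only [Complex.conj_ofReal, RCLike.conj_ofReal]
        rw [← mul_add, h.2, mul_zero]
  haveI : FiniteDimensional ℝ U := FiniteDimensional.span_of_finite ℝ (Set.finite_range A)
  have hre : ∀ x y : EuclideanSpace ℂ (Fin 3), (inner ℝ x y : ℝ) = (inner ℂ x y : ℂ).re := by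
    intro x y
    simp [PiLp.inner_apply, RCLike.inner_apply, Complex.re_sum]
  have hn3 : Module.finrank ℝ U ≤ 3 := by
    simpa [Set.finrank] using finrank_range_le_card (R := ℝ) A
  set f := stdOrthonormalBasis ℝ U with hf
  set F : Fin (Module.finrank ℝ U) → EuclideanSpace ℂ (Fin 3) :=
    fun k => (f k : EuclideanSpace ℂ (Fin 3)) with hF
  have hFU : ∀ k, F k ∈ U := fun k => (f k).2
  have horthF : ∀ k l, (inner ℂ (F k) (F l) : ℂ) = if k = l then 1 else 0 := by
    intro k l
    have h1 : (inner ℝ (F k) (F l) : ℝ) = if k = l then 1 else 0 := by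
      rw [hF]
      simp only [← Submodule.coe_inner]
      exact orthonormal_iff_ite.mp f.orthonormal k l
    apply Complex.ext
    · rw [← hre, h1]; split_ifs <;> simp
    · rw [hgram _ (hFU k) _ (hFU l)]; split_ifs <;> simp
  set sIdx : Set (Fin 3) := {i | (i : ℕ) < Module.finrank ℝ U} with hsIdx
  set v : Fin 3 → EuclideanSpace ℂ (Fin 3) :=
    fun i => if h : (i : ℕ) < Module.finrank ℝ U then F ⟨i, h⟩ else 0 with hv
  have hos : Orthonormal ℂ (sIdx.restrict v) := by
    rw [orthonormal_iff_ite]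
    rintro ⟨i, hi⟩ ⟨j, hj⟩
    have hi' : (i : ℕ) < Module.finrank ℝ U := hi
    have hj' : (j : ℕ) < Module.finrank ℝ U := hj
    show inner ℂ (v i) (v j) = _
    simp only [Set.restrict_apply, hv]
    rw [dif_pos hi', dif_pos hj', horthF]
    by_cases h : i = j
    · subst h; simp
    · rw [if_neg, if_neg]
      · simp [Subtype.ext_iff, h]
      · simp only [Fin.mk.injEq]
        intro hc; exact h (Fin.ext hc)
  have hcard : Module.finrank ℂ (EuclideanSpace ℂ (Fin 3)) = Fintype.card (Fin 3) := by simp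
  obtain ⟨b, hb⟩ := hos.exists_orthonormalBasis_extension_of_card_eq hcard
  -- spans
  have hrangeF : Set.range F = U.subtype '' Set.range ⇑f := by
    rw [hF, ← Set.range_comp]; rfl
  have hspanF : Submodule.span ℝ (Set.range F) = U := by
    have htop : Submodule.span ℝ (Set.range ⇑f) = ⊤ := by
      rw [← f.coe_toBasis]; exact f.toBasis.span_eq
    rw [hrangeF, ← Submodule.map_span, htop, Submodule.map_subtype_top]
  have hmemC : ∀ x ∈ U, x ∈ Submodule.span ℂ (Set.range F) := by
    intro x hx
    rw [← hspanF] at hx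
    exact Submodule.span_subset_span ℝ ℂ _ hx
  have g1 : v₁ ∈ Submodule.span ℂ (Set.range F) := by
    refine hmemC _ ?_
    rw [hU]
    exact Submodule.subset_span (by rw [hrange]; exact Set.mem_insert _ _)
  have g2 : v₀ - v₂ ∈ Submodule.span ℂ (Set.range F) := by
    refine hmemC _ ?_
    rw [hU]
    refine Submodule.subset_span ?_
    rw [hrange]; right; left; rfl
  have g3 : Complex.I • (v₀ + v₂) ∈ Submodule.span ℂ (Set.range F) := by
    refine hmemC _ ?_
    rw [hU]
    refine Submodule.subset_span ?_
    rw [hrange]; right; right; rfl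
  have key : (-Complex.I / 2 : ℂ) * Complex.I = 1 / 2 := by
    linear_combination (-1 / 2 : ℂ) * Complex.I_mul_I
  have hv0span : v₀ ∈ Submodule.span ℂ (Set.range F) := by
    have hdecomp : v₀ = (1 / 2 : ℂ) • (v₀ - v₂) + (-Complex.I / 2 : ℂ) • (Complex.I • (v₀ + v₂)) := by
      rw [smul_smul, key]; module
    rw [hdecomp]
    exact Submodule.add_mem _ (Submodule.smul_mem _ _ g2) (Submodule.smul_mem _ _ g3)
  have hv2span : v₂ ∈ Submodule.span ℂ (Set.range F) := by
    have hdecomp : v₂ = (-1 / 2 : ℂ) • (v₀ - v₂) + (-Complex.I / 2 : ℂ) • (Complex.I • (v₀ + v₂)) := by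
      rw [smul_smul, key]; module
    rw [hdecomp]
    exact Submodule.add_mem _ (Submodule.smul_mem _ _ g2) (Submodule.smul_mem _ _ g3)
  have hmain : ∀ i : Fin 3,
      ((inner ℂ (b i) v₁ : ℂ)).im = 0 ∧ (inner ℂ (b i) v₂ : ℂ) + inner ℂ v₀ (b i) = 0 := by
    intro i
    by_cases hi : (i : ℕ) < Module.finrank ℝ U
    · have hbi : b i = F ⟨i, hi⟩ := by
        rw [hb i hi, hv]; exact dif_pos hi
      rw [hbi]
      exact hcond _ (hFU _)
    · have horth : ∀ y ∈ Submodule.span ℂ (Set.range F), (inner ℂ (b i) y : ℂ) = 0 := by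
        intro y hy
        induction hy using Submodule.span_induction with
        | mem y h =>
          obtain ⟨k, rfl⟩ := h
          have hk : ((⟨(k : ℕ), lt_of_lt_of_le k.2 hn3⟩ : Fin 3) : ℕ) < Module.finrank ℝ U := k.2
          have hbk : b ⟨(k : ℕ), lt_of_lt_of_le k.2 hn3⟩ = F k := by
            rw [hb _ hk, hv]; exact dif_pos hk
          rw [← hbk]
          apply b.orthonormal.2
          intro hcon; apply hi; rw [hcon]; exact hk
        | zero => exact inner_zero_right _
        | add x y hx hy h1 h2 => rw [inner_add_right, h1, h2, add_zero]
        | smul a x hx h1 => rw [inner_smul_right, h1, mul_zero]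
      constructor
      · rw [horth _ g1]; rfl
      · rw [horth _ hv2span, ← inner_conj_symm v₀ (b i), horth _ hv0span, map_zero, add_zero]
  -- build the unitary matrix from the orthonormal basis `b`
  have hinner : ∀ x y : EuclideanSpace ℂ (Fin 3),
      (inner ℂ x y : ℂ) = ∑ j, (starRingEnd ℂ) (x j) * y j := by
    intro x y
    simp [PiLp.inner_apply, RCLike.inner_apply]
    exact Finset.sum_congr rfl fun _ _ => mul_comm _ _
  set M : Matrix (Fin 3) (Fin 3) ℂ := Matrix.of (fun i j => (starRingEnd ℂ) (b i j)) with hM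
  have hMv : ∀ (x : EuclideanSpace ℂ (Fin 3)) (i : Fin 3),
      (M *ᵥ (EuclideanSpace.equiv (Fin 3) ℂ x)) i = inner ℂ (b i) x := by
    intro x i
    rw [hinner]
    rfl
  have hMunit : M ∈ Matrix.unitaryGroup (Fin 3) ℂ := by
    rw [Matrix.mem_unitaryGroup_iff]
    ext i k
    have h1 : (M * star M) i k = inner ℂ (b i) (b k) := by
      rw [Matrix.mul_apply, hinner]
      apply Finset.sum_congr rfl
      intro j _
      simp only [hM, Matrix.of_apply, Matrix.star_apply, starRingEnd_apply, star_star]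
    rw [h1, orthonormal_iff_ite.mp b.orthonormal i k, Matrix.one_apply]
  refine ⟨1, one_pos, M, hMunit, ?_, ?_⟩
  · intro i
    rw [Pi.smul_apply, one_smul, hMv v₁ i]
    exact (hmain i).1
  · rw [one_smul, one_smul]
    funext i
    rw [Pi.neg_apply, Pi.star_apply, hMv, hMv]
    have h2 := (hmain i).2
    rw [← inner_conj_symm v₀ (b i)] at h2
    rw [starRingEnd_apply] at h2
    linear_combination h2
end

section
/- Let v₀, v₁, v₂ ∈ ℂ³ with v₁ ≠ 0. Then the following are equivalent: (a) there exist u ∈ U(3) and μ ∈ ℂ with |μ| = 1 such that conj(v₂) = μ · (u · v₀), conj(v₁) = −μ · (u · v₁) and conj(v₀) = μ · (u · v₂); (b) ‖v₀‖ = ‖v₂‖ and ⟨v₀, v₁⟩ + ⟨v₁, v₂⟩ = 0. -/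
open scoped Matrix

noncomputable section Stmt17Aux

private abbrev V3 := EuclideanSpace ℂ (Fin 3)

/-- entrywise conjugation -/
private def cstar (v : V3) : V3 :=
  (WithLp.equiv 2 (Fin 3 → ℂ)).symm (star (WithLp.equiv 2 (Fin 3 → ℂ) v))

private lemma equiv_cstar (v : V3) :
    WithLp.equiv 2 (Fin 3 → ℂ) (cstar v) = star (WithLp.equiv 2 (Fin 3 → ℂ) v) :=
  (WithLp.equiv 2 (Fin 3 → ℂ)).apply_symm_apply _

private lemma inner_cstar (x y : V3) : (inner ℂ (cstar x) (cstar y) : ℂ) = inner ℂ y x := by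
  simp only [PiLp.inner_apply, RCLike.inner_apply]
  refine Finset.sum_congr rfl fun i _ => ?_
  show starRingEnd ℂ (y i) * starRingEnd ℂ (starRingEnd ℂ (x i)) = x i * starRingEnd ℂ (y i)
  rw [starRingEnd_self_apply, mul_comm]

private lemma unitary_dot {u : Matrix (Fin 3) (Fin 3) ℂ}
    (hu : u ∈ Matrix.unitaryGroup (Fin 3) ℂ) (a b : Fin 3 → ℂ) :
    star (u *ᵥ a) ⬝ᵥ (u *ᵥ b) = star a ⬝ᵥ b := by
  rw [Matrix.mem_unitaryGroup_iff'] at hu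
  rw [Matrix.star_mulVec, Matrix.dotProduct_mulVec, Matrix.vecMul_vecMul,
    ← Matrix.star_eq_conjTranspose, hu, Matrix.vecMul_one]

private lemma exists_unitary_of_isometry (F : V3 →ₗᵢ[ℂ] V3) :
    ∃ u ∈ Matrix.unitaryGroup (Fin 3) ℂ, ∀ x : V3,
      u *ᵥ (WithLp.equiv 2 (Fin 3 → ℂ) x) = WithLp.equiv 2 (Fin 3 → ℂ) (F x) := by
  refine ⟨Matrix.of fun i j => F (EuclideanSpace.single j 1) i, ?_, ?_⟩
  · rw [Matrix.mem_unitaryGroup_iff']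
    ext j k
    have : (inner ℂ (F (EuclideanSpace.single j (1:ℂ))) (F (EuclideanSpace.single k (1:ℂ))) : ℂ)
        = if j = k then 1 else 0 := by
      rw [F.inner_map_map, EuclideanSpace.inner_single_left]
      simp [EuclideanSpace.single_apply, eq_comm]
    rw [Matrix.mul_apply, Matrix.one_apply]
    simp only [Matrix.star_apply, Matrix.of_apply]
    rw [← this]
    simp only [PiLp.inner_apply, RCLike.inner_apply]
    exact Finset.sum_congr rfl fun _ _ => mul_comm _ _
  · intro x
    have hx : x = ∑ j : Fin 3, x j • EuclideanSpace.single j (1:ℂ) := by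
      conv_lhs => rw [← (EuclideanSpace.basisFun (Fin 3) ℂ).sum_repr x]
      simp [EuclideanSpace.basisFun_apply, EuclideanSpace.basisFun_repr]
    funext i
    have hF : F x = ∑ j : Fin 3, x j • F (EuclideanSpace.single j 1) := by
      conv_lhs => rw [hx]
      simp
    show ((Matrix.of fun i j => F (EuclideanSpace.single j 1) i) *ᵥ
        (WithLp.equiv 2 (Fin 3 → ℂ) x)) i = (F x) i
    rw [hF]
    have hsum : (∑ j : Fin 3, x j • F (EuclideanSpace.single j 1)) i
        = ∑ j : Fin 3, x j * F (EuclideanSpace.single j 1) i := by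
      have := Finset.sum_apply i Finset.univ
        (fun j => (WithLp.equiv 2 (Fin 3 → ℂ)) (x j • F (EuclideanSpace.single j 1)))
      exact this
    rw [hsum, Matrix.mulVec]
    simp [dotProduct, mul_comm]

private lemma forward17 {v₀ v₁ v₂ : V3} {u : Matrix (Fin 3) (Fin 3) ℂ}
    (hu : u ∈ Matrix.unitaryGroup (Fin 3) ℂ) {μ : ℂ} (hμ : ‖μ‖ = 1)
    (h1 : star (WithLp.equiv 2 (Fin 3 → ℂ) v₁) = (-μ) • (u *ᵥ WithLp.equiv 2 (Fin 3 → ℂ) v₁))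
    (h0 : star (WithLp.equiv 2 (Fin 3 → ℂ) v₀) = μ • (u *ᵥ WithLp.equiv 2 (Fin 3 → ℂ) v₂)) :
    ‖v₀‖ = ‖v₂‖ ∧ (inner ℂ v₀ v₁ : ℂ) + inner ℂ v₁ v₂ = 0 := by
  set b₀ := WithLp.equiv 2 (Fin 3 → ℂ) v₀ with hb₀
  set b₁ := WithLp.equiv 2 (Fin 3 → ℂ) v₁ with hb₁
  set b₂ := WithLp.equiv 2 (Fin 3 → ℂ) v₂ with hb₂
  have hμ' : μ * star μ = 1 := by
    have := Complex.mul_conj μ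
    rw [Complex.normSq_eq_norm_sq, hμ] at this
    simpa using this
  constructor
  · have hinn : (inner ℂ v₀ v₀ : ℂ) = inner ℂ v₂ v₂ := by
      calc (inner ℂ v₀ v₀ : ℂ) = star b₀ ⬝ᵥ b₀ :=
          (EuclideanSpace.inner_eq_star_dotProduct v₀ v₀).trans (dotProduct_comm _ _)
        _ = star b₀ ⬝ᵥ star (star b₀) := by rw [star_star]
        _ = (μ • (u *ᵥ b₂)) ⬝ᵥ star (μ • (u *ᵥ b₂)) := by rw [← h0]
        _ = (μ * star μ) • ((u *ᵥ b₂) ⬝ᵥ star (u *ᵥ b₂)) := by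
            rw [star_smul, smul_dotProduct, dotProduct_smul, smul_smul]
        _ = star (u *ᵥ b₂) ⬝ᵥ (u *ᵥ b₂) := by rw [hμ', one_smul, dotProduct_comm]
        _ = star b₂ ⬝ᵥ b₂ := unitary_dot hu _ _
        _ = inner ℂ v₂ v₂ :=
          (dotProduct_comm _ _).trans (EuclideanSpace.inner_eq_star_dotProduct v₂ v₂).symm
    rw [inner_self_eq_norm_sq_to_K, inner_self_eq_norm_sq_to_K] at hinn
    have : ‖v₀‖ ^ 2 = ‖v₂‖ ^ 2 := by exact_mod_cast hinn
    nlinarith [norm_nonneg v₀, norm_nonneg v₂]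
  · have key : (inner ℂ v₀ v₁ : ℂ) = -(inner ℂ v₁ v₂ : ℂ) := by
      calc (inner ℂ v₀ v₁ : ℂ) = star b₀ ⬝ᵥ b₁ :=
          (EuclideanSpace.inner_eq_star_dotProduct v₀ v₁).trans (dotProduct_comm _ _)
        _ = star b₀ ⬝ᵥ star (star b₁) := by rw [star_star]
        _ = (μ • (u *ᵥ b₂)) ⬝ᵥ star ((-μ) • (u *ᵥ b₁)) := by rw [← h0, ← h1]
        _ = (μ * star (-μ)) • ((u *ᵥ b₂) ⬝ᵥ star (u *ᵥ b₁)) := by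
            rw [star_smul, smul_dotProduct, dotProduct_smul, smul_smul]
        _ = -((u *ᵥ b₂) ⬝ᵥ star (u *ᵥ b₁)) := by
            rw [star_neg, mul_neg, hμ', neg_one_smul]
        _ = -(star (u *ᵥ b₁) ⬝ᵥ (u *ᵥ b₂)) := by rw [dotProduct_comm]
        _ = -(star b₁ ⬝ᵥ b₂) := by rw [unitary_dot hu]
        _ = -(inner ℂ v₁ v₂ : ℂ) := 
          congrArg Neg.neg ((dotProduct_comm _ _).trans (EuclideanSpace.inner_eq_star_dotProduct v₁ v₂).symm)
    rw [key]; ring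

private def lmap (a b c : V3) : (Fin 3 → ℂ) →ₗ[ℂ] V3 where
  toFun x := x 0 • a + x 1 • b + x 2 • c
  map_add' x y := by simp only [Pi.add_apply, add_smul]; module
  map_smul' r x := by simp only [Pi.smul_apply, smul_eq_mul, mul_smul, RingHom.id_apply,
    smul_add]

private lemma lmap_single0 (a b c : V3) : lmap a b c (Pi.single 0 1) = a := by
  simp [lmap, Pi.single_apply]
private lemma lmap_single1 (a b c : V3) : lmap a b c (Pi.single 1 1) = b := by
  simp [lmap, Pi.single_apply]
private lemma lmap_single2 (a b c : V3) : lmap a b c (Pi.single 2 1) = c := by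
  simp [lmap, Pi.single_apply]

private lemma lmap_norm_eq {a b c a' b' c' : V3}
    (h00 : (inner ℂ a a : ℂ) = inner ℂ a' a') (h11 : (inner ℂ b b : ℂ) = inner ℂ b' b')
    (h22 : (inner ℂ c c : ℂ) = inner ℂ c' c')
    (h01 : (inner ℂ a b : ℂ) = inner ℂ a' b') (h02 : (inner ℂ a c : ℂ) = inner ℂ a' c')
    (h12 : (inner ℂ b c : ℂ) = inner ℂ b' c') (x : Fin 3 → ℂ) :
    ‖lmap a b c x‖ = ‖lmap a' b' c' x‖ := by
  have key : (inner ℂ (lmap a b c x) (lmap a b c x) : ℂ)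
      = inner ℂ (lmap a' b' c' x) (lmap a' b' c' x) := by
    have h10 : (inner ℂ b a : ℂ) = inner ℂ b' a' := by
      rw [← inner_conj_symm, h01, inner_conj_symm]
    have h20 : (inner ℂ c a : ℂ) = inner ℂ c' a' := by
      rw [← inner_conj_symm, h02, inner_conj_symm]
    have h21 : (inner ℂ c b : ℂ) = inner ℂ c' b' := by
      rw [← inner_conj_symm, h12, inner_conj_symm]
    simp only [lmap, LinearMap.coe_mk, AddHom.coe_mk, inner_add_left, inner_add_right,
      inner_smul_left, inner_smul_right]
    rw [h00, h11, h22, h01, h02, h12, h10, h20, h21]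
  rw [inner_self_eq_norm_sq_to_K, inner_self_eq_norm_sq_to_K] at key
  have h2 : ‖lmap a b c x‖ ^ 2 = ‖lmap a' b' c' x‖ ^ 2 := by exact_mod_cast key
  nlinarith [norm_nonneg (lmap a b c x), norm_nonneg (lmap a' b' c' x)]

private lemma exists_isometry {a b c a' b' c' : V3}
    (h00 : (inner ℂ a a : ℂ) = inner ℂ a' a') (h11 : (inner ℂ b b : ℂ) = inner ℂ b' b')
    (h22 : (inner ℂ c c : ℂ) = inner ℂ c' c')
    (h01 : (inner ℂ a b : ℂ) = inner ℂ a' b') (h02 : (inner ℂ a c : ℂ) = inner ℂ a' c')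
    (h12 : (inner ℂ b c : ℂ) = inner ℂ b' c') :
    ∃ F : V3 →ₗᵢ[ℂ] V3, F a = a' ∧ F b = b' ∧ F c = c' := by
  set g := lmap a b c with hg
  set h := lmap a' b' c' with hh
  have hnorm : ∀ x, ‖g x‖ = ‖h x‖ := lmap_norm_eq h00 h11 h22 h01 h02 h12
  have hker : LinearMap.ker g ≤ LinearMap.ker h := by
    intro x hx
    rw [LinearMap.mem_ker] at hx ⊢
    have := hnorm x
    rw [hx, norm_zero] at this
    exact norm_eq_zero.mp this.symm
  set q := Submodule.liftQ (LinearMap.ker g) h hker with hq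
  set e := g.quotKerEquivRange with he
  set φ := q ∘ₗ e.symm.toLinearMap with hφdef
  have hφ : ∀ (x : Fin 3 → ℂ) (hx : g x ∈ LinearMap.range g), φ ⟨g x, hx⟩ = h x := by
    intro x hx
    have hsymm : e.symm ⟨g x, hx⟩ = Submodule.Quotient.mk x := by
      apply e.injective
      rw [LinearEquiv.apply_symm_apply]
      exact Subtype.ext (g.quotKerEquivRange_apply_mk x).symm
    simp only [hφdef, LinearMap.coe_comp, LinearEquiv.coe_coe, Function.comp_apply, hsymm, hq,
      Submodule.liftQ_apply]
  have hφnorm : ∀ s : LinearMap.range g, ‖φ s‖ = ‖s‖ := by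
    rintro ⟨-, x, rfl⟩
    rw [hφ x (LinearMap.mem_range_self g x)]
    exact ((hnorm x).symm.trans rfl :)
  set L : LinearMap.range g →ₗᵢ[ℂ] V3 := ⟨φ, hφnorm⟩ with hL
  have main : ∀ (x : Fin 3 → ℂ), L.extend (g x) = h x := by
    intro x
    have mem : g x ∈ LinearMap.range g := LinearMap.mem_range_self g x
    have h1 := L.extend_apply ⟨g x, mem⟩
    rw [show ((⟨g x, mem⟩ : LinearMap.range g) : V3) = g x from rfl] at h1
    rw [h1]
    exact hφ x mem
  refine ⟨L.extend, ?_, ?_, ?_⟩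
  · have := main (Pi.single 0 1)
    rwa [show g (Pi.single 0 1) = a from lmap_single0 a b c,
      show h (Pi.single 0 1) = a' from lmap_single0 a' b' c'] at this
  · have := main (Pi.single 1 1)
    rwa [show g (Pi.single 1 1) = b from lmap_single1 a b c,
      show h (Pi.single 1 1) = b' from lmap_single1 a' b' c'] at this
  · have := main (Pi.single 2 1)
    rwa [show g (Pi.single 2 1) = c from lmap_single2 a b c,
      show h (Pi.single 2 1) = c' from lmap_single2 a' b' c'] at this

end Stmt17Aux

/-- The centring condition for a charge-2 monopole: the coefficient form of
`q(ẑ) = u·q(z)` holds for some `u ∈ U(3)` and unimodular `μ` if and only if the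
moment map vanishes: `‖v₀‖ = ‖v₂‖` and `⟨v₀,v₁⟩ + ⟨v₁,v₂⟩ = 0`. -/
theorem stmt_17 (v₀ v₁ v₂ : EuclideanSpace ℂ (Fin 3)) (hv₁ : v₁ ≠ 0) :
    (∃ u ∈ Matrix.unitaryGroup (Fin 3) ℂ, ∃ μ : ℂ, ‖μ‖ = 1 ∧
      star (EuclideanSpace.equiv (Fin 3) ℂ v₂) =
        μ • (u *ᵥ EuclideanSpace.equiv (Fin 3) ℂ v₀) ∧
      star (EuclideanSpace.equiv (Fin 3) ℂ v₁) =
        (-μ) • (u *ᵥ EuclideanSpace.equiv (Fin 3) ℂ v₁) ∧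
      star (EuclideanSpace.equiv (Fin 3) ℂ v₀) =
        μ • (u *ᵥ EuclideanSpace.equiv (Fin 3) ℂ v₂)) ↔
    (‖v₀‖ = ‖v₂‖ ∧ (inner ℂ v₀ v₁ : ℂ) + inner ℂ v₁ v₂ = 0) := by
  constructor
  · rintro ⟨u, hu, μ, hμ, -, h1, h0⟩
    exact forward17 hu hμ h1 h0
  · rintro ⟨hn, hi⟩
    have h01' : (inner ℂ v₀ v₁ : ℂ) = -(inner ℂ v₁ v₂ : ℂ) := by linear_combination hi
    have h00 : (inner ℂ v₀ v₀ : ℂ) = inner ℂ (cstar v₂) (cstar v₂) := by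
      rw [inner_cstar, inner_self_eq_norm_sq_to_K, inner_self_eq_norm_sq_to_K, hn]
    have h11 : (inner ℂ v₁ v₁ : ℂ) = inner ℂ (-(cstar v₁)) (-(cstar v₁)) := by
      rw [inner_neg_neg, inner_cstar]
    have h22 : (inner ℂ v₂ v₂ : ℂ) = inner ℂ (cstar v₀) (cstar v₀) := by
      rw [inner_cstar, inner_self_eq_norm_sq_to_K, inner_self_eq_norm_sq_to_K, hn]
    have h01 : (inner ℂ v₀ v₁ : ℂ) = inner ℂ (cstar v₂) (-(cstar v₁)) := by
      rw [inner_neg_right, inner_cstar, ← h01']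
    have h02 : (inner ℂ v₀ v₂ : ℂ) = inner ℂ (cstar v₂) (cstar v₀) := by
      rw [inner_cstar]
    have h12 : (inner ℂ v₁ v₂ : ℂ) = inner ℂ (-(cstar v₁)) (cstar v₀) := by
      rw [inner_neg_left, inner_cstar, h01']
      ring
    obtain ⟨F, hF0, hF1, hF2⟩ := exists_isometry h00 h11 h22 h01 h02 h12
    obtain ⟨u, hu, huact⟩ := exists_unitary_of_isometry F
    refine ⟨u, hu, 1, by simp, ?_, ?_, ?_⟩
    · show star (WithLp.equiv 2 (Fin 3 → ℂ) v₂)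
        = (1:ℂ) • (u *ᵥ WithLp.equiv 2 (Fin 3 → ℂ) v₀)
      rw [one_smul, huact, hF0, equiv_cstar]
    · show star (WithLp.equiv 2 (Fin 3 → ℂ) v₁)
        = (-1:ℂ) • (u *ᵥ WithLp.equiv 2 (Fin 3 → ℂ) v₁)
      rw [neg_one_smul, huact, hF1, show (WithLp.equiv 2 (Fin 3 → ℂ)) (-(cstar v₁))
        = -((WithLp.equiv 2 (Fin 3 → ℂ)) (cstar v₁)) from rfl, neg_neg, equiv_cstar]
    · show star (WithLp.equiv 2 (Fin 3 → ℂ) v₀)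
        = (1:ℂ) • (u *ᵥ WithLp.equiv 2 (Fin 3 → ℂ) v₂)
      rw [one_smul, huact, hF2, equiv_cstar]
end
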